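/- arXiv:1501.02215 — 8 statements merged into one kernel-verified Lean document; each statement's English description precedes it below -/
import Mathlib

section
/- Let R be a commutative ring, A a commutative R-algebra, and (L, ρ) an (R,A)-Lie algebra (Lie–Rinehart algebra). Let B be a commutative R-algebra with an R-algebra homomorphism φ : A → B, and suppose the anchor map ρ : L → Der_R(A) lifts to an A-linear Lie algebra homomorphism σ : L → Der_R(B), in the sense that σ(x) ∘ φ = φ ∘ ρ(x) for all x ∈ L. Then the B-module B ⊗_A L carries a unique (R,B)-Lie algebra structure with anchor 1 ⊗ σ, where the bracket is given by [b⊗x, b'⊗x'] = bb'⊗[x,x'] − b'σ(x')(b)⊗x + bσ(x)(b')⊗x'. -/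
/-!
The bracket is built in two balanced steps. For `x : L`, the operator `ad x = ⁅1 ⊗ x, ·⁆`,
`b' ⊗ x' ↦ b' ⊗ ⁅x, x'⁆ + σ(x)(b') ⊗ x'`, is well defined on `B ⊗[A] L` because the Leibniz rule
of `L` and `σ(x) ∘ φ = φ ∘ ρ(x)` make it `A`-balanced. Then
`⁅b ⊗ x, v⁆ = b • ad x v - α(v)(b) ⊗ x`, with `α = 1 ⊗ σ` the anchor, is `A`-balanced in `(b, x)`
since `ad (a • x) = a • ad x - α(·)(φ a) ⊗ x`. Uniqueness holds because pure tensors span;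
skew-symmetry, the Jacobi identity and the Leibniz rule reduce to pure tensors, where the Jacobi
identity uses that `σ` is a Lie algebra homomorphism.
-/

open scoped TensorProduct

namespace TensorProduct

variable {R A M N P : Type*} [CommSemiring R] [CommSemiring A] [Algebra R A]
  [AddCommMonoid M] [Module R M] [Module A M] [IsScalarTower R A M]
  [AddCommMonoid N] [Module A N]
  [AddCommMonoid P] [Module R P]

theorem ext_of_tmul {f g : M ⊗[A] N →ₗ[R] P} (h : ∀ m n, f (m ⊗ₜ n) = g (m ⊗ₜ n)) : f = g :=
  LinearMap.ext fun u => u.induction_on (by simp only [map_zero]) h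
    fun _ _ hu hv => by rw [map_add, map_add, hu, hv]

variable [Module R N]

def liftBalanced (f : M →ₗ[R] N →ₗ[R] P) (hf : ∀ (a : A) m n, f (a • m) n = f m (a • n)) :
    M ⊗[A] N →ₗ[R] P where
  __ := liftAddHom (LinearMap.toAddMonoidHom'.comp f.toAddMonoidHom) hf
  map_smul' r u := by
    induction u using TensorProduct.induction_on with
    | zero => simp
    | tmul m n => rw [smul_tmul']; exact f.map_smul₂ r m n
    | add u v hu hv => simp_all

@[simp]
theorem liftBalanced_tmul (f : M →ₗ[R] N →ₗ[R] P)
    (hf : ∀ (a : A) m n, f (a • m) n = f m (a • n)) (m : M) (n : N) :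
    liftBalanced f hf (m ⊗ₜ n) = f m n := rfl

end TensorProduct

namespace LieRinehart.BaseChange

open TensorProduct

section Anchor

variable {R A B L : Type*} [CommRing R] [CommRing A] [Algebra R A]
    [CommRing B] [Algebra R B] [Algebra A B] [IsScalarTower R A B]
    [AddCommGroup L] [Module A L] (σ : L →ₗ[A] Derivation R B B)

def anchor : B ⊗[A] L →ₗ[B] Derivation R B B := σ.liftBaseChange B

@[simp]
theorem anchor_tmul (b : B) (x : L) : anchor σ (b ⊗ₜ[A] x) = b • σ x := rfl

def anchorTmul (b : B) (x : L) : Module.End R (B ⊗[A] L) where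
  toFun v := anchor σ v b ⊗ₜ x
  map_add' v w := by simp only [map_add, Derivation.add_apply, add_tmul]
  map_smul' r v := by simp [smul_tmul']

@[simp]
theorem anchorTmul_apply (b : B) (x : L) (v : B ⊗[A] L) :
    anchorTmul σ b x v = anchor σ v b ⊗ₜ x := rfl

end Anchor

variable {R A B L : Type*} [CommRing R] [CommRing A] [Algebra R A]
    [CommRing B] [Algebra R B] [Algebra A B] [IsScalarTower R A B]
    [LieRing L] [LieAlgebra R L] [Module A L] [IsScalarTower R A L]
    {ρ : L → Derivation R A A} (σ : L →ₗ[A] Derivation R B B)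
    (hLeib : ∀ (x y : L) (a : A), ⁅x, a • y⁆ = a • ⁅x, y⁆ + ρ x a • y)
    (hσlift : ∀ (x : L) (a : A), σ x (algebraMap A B a) = algebraMap A B (ρ x a))

def adAux (x : L) : B →ₗ[R] L →ₗ[R] B ⊗[A] L :=
  LinearMap.mk₂ R (fun b y => b ⊗ₜ ⁅x, y⁆ + σ x b ⊗ₜ y)
    (fun b c y => by simp only [add_tmul, map_add]; abel)
    (fun r b y => by simp only [smul_tmul', Derivation.map_smul, smul_add])
    (fun b y z => by simp only [lie_add, tmul_add]; abel)
    (fun r y z => by simp only [lie_smul, tmul_smul, smul_add])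

include hLeib hσlift in
theorem adAux_balanced (x : L) (a : A) (b : B) (y : L) :
    adAux σ x (a • b) y = adAux σ x b (a • y) := by
  simp only [adAux, LinearMap.mk₂_apply, hLeib, tmul_add, ← smul_tmul, Algebra.smul_def,
    Derivation.leibniz, hσlift, add_tmul, Algebra.algebraMap_self, RingHom.id_apply]
  rw [mul_comm b]
  abel

def ad : L →ₗ[R] Module.End R (B ⊗[A] L) where
  toFun x := liftBalanced (adAux σ x) (adAux_balanced σ hLeib hσlift x)
  map_add' x y := ext_of_tmul fun b z => by
    simp only [liftBalanced_tmul, adAux, LinearMap.mk₂_apply, LinearMap.add_apply, add_lie,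
      map_add, Derivation.add_apply, tmul_add, add_tmul]
    abel
  map_smul' r x := ext_of_tmul fun b z => by
    simp [adAux, smul_lie, tmul_smul, smul_tmul']

@[simp]
theorem ad_tmul (x : L) (b : B) (y : L) :
    ad σ hLeib hσlift x (b ⊗ₜ y) = b ⊗ₜ ⁅x, y⁆ + σ x b ⊗ₜ y := rfl

include hLeib hσlift in
theorem ad_algebra_smul (a : A) (x : L) (v : B ⊗[A] L) :
    ad σ hLeib hσlift (a • x) v =
      a • ad σ hLeib hσlift x v - anchor σ v (algebraMap A B a) ⊗ₜ x := by
  induction v using TensorProduct.induction_on with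
  | zero => simp
  | tmul b y =>
    have hlie : ⁅a • x, y⁆ = a • ⁅x, y⁆ - ρ y a • x := by
      rw [← lie_skew, hLeib, ← lie_skew x y]
      module
    simp only [ad_tmul, hlie, anchor_tmul, map_smul, Derivation.smul_apply, hσlift, tmul_sub,
      tmul_smul, smul_tmul', smul_add, Algebra.smul_def, Algebra.algebraMap_self, RingHom.id_apply]
    rw [mul_comm (algebraMap A B (ρ y a))]
    abel
  | add v w hv hw => simp only [map_add, hv, hw, Derivation.add_apply, add_tmul, smul_add]; abel

theorem ad_smul (x : L) (c : B) (v : B ⊗[A] L) :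
    ad σ hLeib hσlift x (c • v) = c • ad σ hLeib hσlift x v + σ x c • v := by
  induction v using TensorProduct.induction_on with
  | zero => simp
  | tmul b y =>
    simp only [smul_tmul', ad_tmul, smul_eq_mul, Derivation.leibniz, add_tmul, smul_add]
    rw [mul_comm (σ x c) b, add_assoc]
  | add v w hv hw => simp only [smul_add, map_add, hv, hw]; abel

def bracketAux : B →ₗ[R] L →ₗ[R] Module.End R (B ⊗[A] L) :=
  LinearMap.mk₂ R (fun b x => b • ad σ hLeib hσlift x - anchorTmul σ b x)
    (fun b c x => LinearMap.ext fun v => by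
      simp only [add_smul, LinearMap.sub_apply, LinearMap.add_apply, LinearMap.smul_apply,
        anchorTmul_apply, map_add, add_tmul]
      abel)
    (fun r b x => LinearMap.ext fun v => by simp [smul_sub, smul_tmul', smul_assoc])
    (fun b x y => LinearMap.ext fun v => by
      simp only [map_add, smul_add, LinearMap.sub_apply, LinearMap.add_apply,
        LinearMap.smul_apply, anchorTmul_apply, tmul_add]
      abel)
    (fun r x y => LinearMap.ext fun v => by simp [tmul_smul, smul_sub, smul_comm r])

include hLeib hσlift in
theorem bracketAux_balanced (a : A) (b : B) (x : L) :
    bracketAux σ hLeib hσlift (a • b) x = bracketAux σ hLeib hσlift b (a • x) := by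
  ext v
  simp only [bracketAux, LinearMap.mk₂_apply, LinearMap.sub_apply, LinearMap.smul_apply,
    anchorTmul_apply, ad_algebra_smul, tmul_smul]
  rw [Algebra.smul_def a b, Derivation.leibniz]
  simp only [smul_tmul', smul_sub, smul_eq_mul, Algebra.smul_def, add_tmul]
  rw [mul_smul, algebraMap_smul, smul_comm a b]
  abel

def bracket : B ⊗[A] L →ₗ[R] B ⊗[A] L →ₗ[R] B ⊗[A] L :=
  liftBalanced (bracketAux σ hLeib hσlift) (bracketAux_balanced σ hLeib hσlift)

theorem bracket_tmul (b : B) (x : L) (v : B ⊗[A] L) :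
    bracket σ hLeib hσlift (b ⊗ₜ x) v = b • ad σ hLeib hσlift x v - anchor σ v b ⊗ₜ x := rfl

theorem bracket_tmul_tmul (b c : B) (x y : L) :
    bracket σ hLeib hσlift (b ⊗ₜ x) (c ⊗ₜ y) =
      (b * c) ⊗ₜ ⁅x, y⁆ - (c * σ y b) ⊗ₜ x + (b * σ x c) ⊗ₜ y := by
  simp only [bracket_tmul, ad_tmul, smul_add, smul_tmul', smul_eq_mul, anchor_tmul,
    Derivation.smul_apply]
  abel

theorem eq_bracket_of_tmul {br : B ⊗[A] L →ₗ[R] B ⊗[A] L →ₗ[R] B ⊗[A] L}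
    (h : ∀ (b c : B) (x y : L),
      br (b ⊗ₜ x) (c ⊗ₜ y) = (b * c) ⊗ₜ ⁅x, y⁆ - (c * σ y b) ⊗ₜ x + (b * σ x c) ⊗ₜ y) :
    br = bracket σ hLeib hσlift :=
  ext_of_tmul fun b x => ext_of_tmul fun c y => by rw [h, bracket_tmul_tmul]

theorem bracket_antisymm (u v : B ⊗[A] L) :
    bracket σ hLeib hσlift u v = -bracket σ hLeib hσlift v u := by
  induction u using TensorProduct.induction_on with
  | zero => simp
  | add u u' hu hu' => simp only [map_add, LinearMap.add_apply, hu, hu', neg_add]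
  | tmul b x =>
    induction v using TensorProduct.induction_on with
    | zero => simp
    | add v v' hv hv' => simp only [map_add, LinearMap.add_apply, hv, hv', neg_add]
    | tmul c y =>
      rw [bracket_tmul_tmul, bracket_tmul_tmul, ← lie_skew y x, tmul_neg, mul_comm c b]
      abel

theorem bracket_self (u : B ⊗[A] L) : bracket σ hLeib hσlift u u = 0 := by
  induction u using TensorProduct.induction_on with
  | zero => simp
  | add u v hu hv =>
    simp only [map_add, LinearMap.add_apply, hu, hv, bracket_antisymm σ hLeib hσlift v u]
    abel
  | tmul b x => rw [bracket_tmul_tmul, lie_self, tmul_zero, mul_comm b]; abel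

theorem bracket_tmul_smul (b : B) (x : L) (c : B) (v : B ⊗[A] L) :
    bracket σ hLeib hσlift (b ⊗ₜ x) (c • v) =
      c • bracket σ hLeib hσlift (b ⊗ₜ x) v + (b * σ x c) • v := by
  rw [bracket_tmul, bracket_tmul, ad_smul, map_smul, Derivation.smul_apply, ← smul_tmul']
  module

theorem bracket_leibniz_lie_tmul
    (hσLie : ∀ (x y : L) (b : B), σ ⁅x, y⁆ b = σ x (σ y b) - σ y (σ x b)) (b c d : B) (x y z : L) :
    bracket σ hLeib hσlift (b ⊗ₜ x) (bracket σ hLeib hσlift (c ⊗ₜ y) (d ⊗ₜ z)) =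
      bracket σ hLeib hσlift (bracket σ hLeib hσlift (b ⊗ₜ x) (c ⊗ₜ y)) (d ⊗ₜ z) +
        bracket σ hLeib hσlift (c ⊗ₜ y) (bracket σ hLeib hσlift (b ⊗ₜ x) (d ⊗ₜ z)) := by
  simp only [bracket_tmul_tmul, map_add, map_sub, LinearMap.add_apply, LinearMap.sub_apply,
    hσLie, lie_lie, Derivation.leibniz, smul_eq_mul, tmul_sub, add_tmul, sub_tmul, mul_add,
    mul_sub]
  simp only [← lie_skew y x, tmul_neg]
  ring_nf
  abel

theorem bracket_leibniz_lie
    (hσLie : ∀ (x y : L) (b : B), σ ⁅x, y⁆ b = σ x (σ y b) - σ y (σ x b)) (u v w : B ⊗[A] L) :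
    bracket σ hLeib hσlift u (bracket σ hLeib hσlift v w) =
      bracket σ hLeib hσlift (bracket σ hLeib hσlift u v) w +
        bracket σ hLeib hσlift v (bracket σ hLeib hσlift u w) := by
  induction u using TensorProduct.induction_on with
  | zero => simp
  | add u u' hu hu' => simp only [map_add, LinearMap.add_apply, hu, hu']; abel
  | tmul b x =>
    induction v using TensorProduct.induction_on with
    | zero => simp
    | add v v' hv hv' => simp only [map_add, LinearMap.add_apply, hv, hv']; abel
    | tmul c y =>
      induction w using TensorProduct.induction_on with
      | zero => simp
      | add w w' hw hw' => simp only [map_add, hw, hw']; abel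
      | tmul d z => exact bracket_leibniz_lie_tmul σ hLeib hσlift hσLie b c d x y z

end LieRinehart.BaseChange

open LieRinehart.BaseChange in
theorem lieRinehart_base_change_general
    {R A B L : Type*} [CommRing R] [CommRing A] [Algebra R A]
    [CommRing B] [Algebra R B] [Algebra A B] [IsScalarTower R A B]
    [LieRing L] [LieAlgebra R L] [Module A L] [IsScalarTower R A L]
    (ρ : L →ₗ[A] Derivation R A A)
    (hLeib : ∀ (x y : L) (a : A), ⁅x, a • y⁆ = a • ⁅x, y⁆ + ρ x a • y)
    (σ : L → Derivation R B B)
    (hσadd : ∀ x y : L, σ (x + y) = σ x + σ y)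
    (hσA : ∀ (a : A) (x : L), σ (a • x) = algebraMap A B a • σ x)
    (hσLie : ∀ x y : L, ∀ b : B, σ ⁅x, y⁆ b = σ x (σ y b) - σ y (σ x b))
    (hσlift : ∀ (x : L) (a : A), σ x (algebraMap A B a) = algebraMap A B (ρ x a)) :
    (∃! br : (B ⊗[A] L) →ₗ[R] (B ⊗[A] L) →ₗ[R] (B ⊗[A] L),
        ∀ (b b' : B) (x x' : L),
          br (b ⊗ₜ[A] x) (b' ⊗ₜ[A] x') =
            (b * b') ⊗ₜ[A] ⁅x, x'⁆ - (b' * σ x' b) ⊗ₜ[A] x + (b * σ x b') ⊗ₜ[A] x') ∧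
      ∀ br : (B ⊗[A] L) →ₗ[R] (B ⊗[A] L) →ₗ[R] (B ⊗[A] L),
        (∀ (b b' : B) (x x' : L),
            br (b ⊗ₜ[A] x) (b' ⊗ₜ[A] x') =
              (b * b') ⊗ₜ[A] ⁅x, x'⁆ - (b' * σ x' b) ⊗ₜ[A] x + (b * σ x b') ⊗ₜ[A] x') →
          (∀ u : B ⊗[A] L, br u u = 0) ∧
          (∀ u v : B ⊗[A] L, br u v = - br v u) ∧
          (∀ u v w : B ⊗[A] L, br u (br v w) = br (br u v) w + br v (br u w)) ∧
          (∀ (b : B) (x : L) (c : B) (v : B ⊗[A] L),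
            br (b ⊗ₜ[A] x) (c • v) = c • br (b ⊗ₜ[A] x) v + (b * σ x c) • v) := by
  let σₗ : L →ₗ[A] Derivation R B B :=
    { toFun := σ
      map_add' := hσadd
      map_smul' := fun a x => by rw [hσA, algebraMap_smul]; rfl }
  refine ⟨⟨bracket σₗ hLeib hσlift, bracket_tmul_tmul σₗ hLeib hσlift,
    fun br h => eq_bracket_of_tmul σₗ hLeib hσlift h⟩, fun br h => ?_⟩
  obtain rfl := eq_bracket_of_tmul σₗ hLeib hσlift h
  exact ⟨bracket_self σₗ hLeib hσlift, bracket_antisymm σₗ hLeib hσlift,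
    bracket_leibniz_lie σₗ hLeib hσlift hσLie, bracket_tmul_smul σₗ hLeib hσlift⟩

/-- base change of Lie–Rinehart algebras.
Let `R` be a commutative ring, `A` a commutative `R`-algebra and `(L, ρ)` an `(R,A)`-Lie
algebra: `L` is an `R`-Lie algebra and an `A`-module, the anchor `ρ : L → Der_R(A)` is an
`A`-linear Lie algebra homomorphism, and the Leibniz rule `⁅x, a•y⁆ = a•⁅x,y⁆ + ρ(x)(a)•y`
holds.  Let `φ : A → B` be a homomorphism of commutative `R`-algebras (recorded here by the
`Algebra A B` instance) and suppose the anchor lifts to an `A`-linear Lie algebra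
homomorphism `σ : L → Der_R(B)`, i.e. `σ(x)(φ(a)) = φ(ρ(x)(a))`.

Then `B ⊗_A L` carries a unique `R`-bilinear bracket satisfying
`⁅b⊗x, b'⊗x'⁆ = bb' ⊗ ⁅x,x'⁆ − b'·σ(x')(b) ⊗ x + b·σ(x)(b') ⊗ x'`,
and this bracket makes `B ⊗_A L` an `(R,B)`-Lie algebra with anchor `1 ⊗ σ`:
it is alternating, satisfies the (Leibniz form of the) Jacobi identity, and the
Lie–Rinehart Leibniz identity with respect to the `B`-module structure and the anchor. -/
theorem lieRinehart_base_change
    {R A B L : Type*} [CommRing R] [CommRing A] [Algebra R A]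
    [CommRing B] [Algebra R B] [Algebra A B] [IsScalarTower R A B]
    [LieRing L] [LieAlgebra R L] [Module A L] [IsScalarTower R A L]
    (ρ : L →ₗ[A] Derivation R A A)
    (hρLie : ∀ x y : L, ∀ a : A, ρ ⁅x, y⁆ a = ρ x (ρ y a) - ρ y (ρ x a))
    (hLeib : ∀ (x y : L) (a : A), ⁅x, a • y⁆ = a • ⁅x, y⁆ + ρ x a • y)
    (σ : L → Derivation R B B)
    (hσadd : ∀ x y : L, σ (x + y) = σ x + σ y)
    (hσA : ∀ (a : A) (x : L), σ (a • x) = algebraMap A B a • σ x)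
    (hσLie : ∀ x y : L, ∀ b : B, σ ⁅x, y⁆ b = σ x (σ y b) - σ y (σ x b))
    (hσlift : ∀ (x : L) (a : A), σ x (algebraMap A B a) = algebraMap A B (ρ x a)) :
    (∃! br : (B ⊗[A] L) →ₗ[R] (B ⊗[A] L) →ₗ[R] (B ⊗[A] L),
        ∀ (b b' : B) (x x' : L),
          br (b ⊗ₜ[A] x) (b' ⊗ₜ[A] x') =
            (b * b') ⊗ₜ[A] ⁅x, x'⁆ - (b' * σ x' b) ⊗ₜ[A] x + (b * σ x b') ⊗ₜ[A] x') ∧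
      ∀ br : (B ⊗[A] L) →ₗ[R] (B ⊗[A] L) →ₗ[R] (B ⊗[A] L),
        (∀ (b b' : B) (x x' : L),
            br (b ⊗ₜ[A] x) (b' ⊗ₜ[A] x') =
              (b * b') ⊗ₜ[A] ⁅x, x'⁆ - (b' * σ x' b) ⊗ₜ[A] x + (b * σ x b') ⊗ₜ[A] x') →
          (∀ u : B ⊗[A] L, br u u = 0) ∧
          (∀ u v : B ⊗[A] L, br u v = - br v u) ∧
          (∀ u v w : B ⊗[A] L, br u (br v w) = br (br u v) w + br v (br u w)) ∧
          (∀ (b : B) (x : L) (c : B) (v : B ⊗[A] L),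
            br (b ⊗ₜ[A] x) (c • v) = c • br (b ⊗ₜ[A] x) v + (b * σ x c) • v) :=
  lieRinehart_base_change_general ρ hLeib σ hσadd hσA hσLie hσlift
end

section
/- Let A be a Banach K-algebra, f ∈ A a central element, and M a Noetherian Banach A-module. Then M⟨t⟩ has no (t − f)-torsion: if (t − f)·(Σ_{j≥0} t^j m_j) = 0 in M⟨t⟩ then all m_j = 0. -/
open Filter Topology

/-- Coefficientwise multiplication by `t − f` on the module `M⟨t⟩` of convergent power
series `Σ tʲ mⱼ`, represented by their coefficient sequences `m : ℕ → M`: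
the `j`-th coefficient of `(t − f)·Σ tʲ mⱼ` is `m_{j−1} − f • m_j` (with `m_{−1} = 0`). -/
noncomputable def mulTSubF {A M : Type*} [Ring A] [AddCommGroup M] [Module A M]
    (f : A) (m : ℕ → M) : ℕ → M :=
  fun j => (if j = 0 then 0 else m (j - 1)) - f • m j

/-!
The relations `f • m₀ = 0` and `mⱼ = f • mⱼ₊₁` give `mⱼ = fⁿ • mⱼ₊ₙ` and `fʲ⁺¹ • mⱼ = 0`
for all `j` and `n`. Since `f` is central, the kernels of `fᵏ` on `M` are `A`-submodules; they
form an ascending chain, which stabilises at some `n` because `M` is Noetherian. Then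
`mⱼ₊ₙ` is killed by `fⁿ`, so `mⱼ = fⁿ • mⱼ₊ₙ = 0`.
-/

theorem IsNoetherian.exists_pow_smul_eq_zero_of_pow_smul_eq_zero {A M : Type*} [Ring A]
    [AddCommGroup M] [Module A M] [IsNoetherian A M] {f : A} (hf : f ∈ Subsemiring.center A) :
    ∃ n : ℕ, ∀ (x : M) (k : ℕ), f ^ k • x = 0 → f ^ n • x = 0 := by
  let g : Module.End A M := Module.toModuleEnd A M (⟨f, hf⟩ : Subsemiring.center A)
  have hg : ∀ (k : ℕ) (x : M), (g ^ k) x = f ^ k • x := fun k x => by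
    rw [← map_pow, Module.toModuleEnd_apply, DistribSMul.toLinearMap_apply]
    rfl
  obtain ⟨n, hn⟩ := g.eventually_iSup_ker_pow_eq.exists
  refine ⟨n, fun x k hx => ?_⟩
  have hker : x ∈ LinearMap.ker (g ^ n) :=
    hn ▸ Submodule.mem_iSup_of_mem (p := fun k => LinearMap.ker (g ^ k)) k
      (by rwa [LinearMap.mem_ker, hg])
  rwa [LinearMap.mem_ker, hg] at hker

section mulTSubF

variable {A M : Type*} [Ring A] [AddCommGroup M] [Module A M] {f : A} {m : ℕ → M}

theorem mulTSubF_eq_zero_iff :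
    mulTSubF f m = 0 ↔ f • m 0 = 0 ∧ ∀ j, m j = f • m (j + 1) := by
  constructor
  · intro h
    refine ⟨by simpa [mulTSubF] using congrFun h 0, fun j => ?_⟩
    simpa [mulTSubF, sub_eq_zero] using congrFun h (j + 1)
  · rintro ⟨h0, hs⟩
    funext j
    cases j <;> simp [mulTSubF, h0, ← hs]

theorem eq_pow_smul_of_mulTSubF_eq_zero (h : mulTSubF f m = 0) (j k : ℕ) :
    m j = f ^ k • m (j + k) := by
  induction k with
  | zero => simp
  | succ k ih => rw [ih, (mulTSubF_eq_zero_iff.mp h).2 (j + k), ← mul_smul, ← pow_succ, add_assoc]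

theorem pow_succ_smul_of_mulTSubF_eq_zero (h : mulTSubF f m = 0) (j : ℕ) :
    f ^ (j + 1) • m j = 0 := by
  have h0j := eq_pow_smul_of_mulTSubF_eq_zero h 0 j
  rw [zero_add] at h0j
  rw [pow_succ', mul_smul, ← h0j]
  exact (mulTSubF_eq_zero_iff.mp h).1

end mulTSubF

theorem tate_module_no_t_sub_f_torsion_general
    {A : Type*} [NormedRing A]
    {M : Type*} [NormedAddCommGroup M] [Module A M]
    [IsNoetherian A M]
    (f : A) (hf : ∀ a : A, f * a = a * f)
    (m : ℕ → M)
    (h : mulTSubF f m = 0) : m = 0 := by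
  obtain ⟨n, hn⟩ := IsNoetherian.exists_pow_smul_eq_zero_of_pow_smul_eq_zero
    (M := M) (Subsemiring.mem_center_iff.mpr fun a => (hf a).symm)
  funext j
  rw [Pi.zero_apply, eq_pow_smul_of_mulTSubF_eq_zero h j n]
  exact hn _ _ (pow_succ_smul_of_mulTSubF_eq_zero h (j + n))

/-- Let `A` be a Banach `K`-algebra, `f ∈ A` a central element, and `M` a
Noetherian Banach `A`-module.  Then `M⟨t⟩` has no `(t − f)`-torsion: if
`(t − f)·(Σ_{j≥0} tʲ mⱼ) = 0` in `M⟨t⟩` then all `mⱼ = 0`. -/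
theorem tate_module_no_t_sub_f_torsion
    {K : Type*} [NontriviallyNormedField K] [CompleteSpace K]
    {A : Type*} [NormedRing A] [NormedAlgebra K A] [CompleteSpace A]
    {M : Type*} [NormedAddCommGroup M] [Module A M] [IsBoundedSMul A M] [CompleteSpace M]
    [IsNoetherian A M]
    (f : A) (hf : ∀ a : A, f * a = a * f)
    (m : ℕ → M) (hm : Tendsto m atTop (𝓝 0))
    (h : mulTSubF f m = 0) : m = 0 :=
  tate_module_no_t_sub_f_torsion_general f hf m h
end

section
/- Let S → T be a ring homomorphism and u ∈ T a left regular element (left multiplication by u is injective). Suppose (a) T is flat as a right S-module, and (b) for every finitely generated left S-module M, the module T ⊗_S M has no u-torsion (left multiplication by u is injective on T ⊗_S M). Then W := T/uT is also flat as a right S-module. -/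
open scoped TensorProduct
open MulOpposite

universe u v

section RTensorLib

variable (S : Type*) [Ring S]

/-- The relations defining the balanced tensor product `P ⊗_S M` of a right `S`-module `P`
(a module over `Sᵐᵒᵖ`) and a left `S`-module `M` as a quotient of `P ⊗_ℤ M`. -/
noncomputable def tensorRel (P M : Type*) [AddCommGroup P] [Module Sᵐᵒᵖ P]
    [AddCommGroup M] [Module S M] : Submodule ℤ (P ⊗[ℤ] M) :=
  Submodule.span ℤ
    {z | ∃ (p : P) (s : S) (m : M), z = (op s • p) ⊗ₜ[ℤ] m - p ⊗ₜ[ℤ] (s • m)}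

/-- The balanced tensor product `P ⊗_S M` over the (possibly noncommutative) ring `S`. -/
noncomputable abbrev RTensor (P M : Type*) [AddCommGroup P] [Module Sᵐᵒᵖ P]
    [AddCommGroup M] [Module S M] : Type _ :=
  (P ⊗[ℤ] M) ⧸ tensorRel S P M

/-- Functoriality of `P ⊗_S −` in left `S`-module maps. -/
noncomputable def RTensor.map (P : Type*) [AddCommGroup P] [Module Sᵐᵒᵖ P]
    {M N : Type*} [AddCommGroup M] [Module S M] [AddCommGroup N] [Module S N]
    (g : M →ₗ[S] N) : RTensor S P M →ₗ[ℤ] RTensor S P N :=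
  Submodule.mapQ _ _ (LinearMap.lTensor P (g.restrictScalars ℤ)) (by
    unfold tensorRel
    rw [Submodule.span_le]
    rintro z ⟨p, s, m, rfl⟩
    apply Submodule.mem_comap.2
    apply Submodule.subset_span
    exact ⟨p, s, g m, by
      erw [LinearMap.map_sub, LinearMap.lTensor_tmul, LinearMap.lTensor_tmul]
      simp [LinearMap.map_smul]⟩)

/-- Functoriality of `− ⊗_S M` in right `S`-module maps. -/
noncomputable def RTensor.mapLeft {P Q : Type*} [AddCommGroup P] [Module Sᵐᵒᵖ P]
    [AddCommGroup Q] [Module Sᵐᵒᵖ Q] (h : P →ₗ[Sᵐᵒᵖ] Q)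
    (M : Type*) [AddCommGroup M] [Module S M] :
    RTensor S P M →ₗ[ℤ] RTensor S Q M :=
  Submodule.mapQ _ _ (LinearMap.rTensor M (h.restrictScalars ℤ)) (by
    unfold tensorRel
    rw [Submodule.span_le]
    rintro z ⟨p, s, m, rfl⟩
    apply Submodule.mem_comap.2
    apply Submodule.subset_span
    exact ⟨h p, s, m, by
      erw [LinearMap.map_sub, LinearMap.rTensor_tmul, LinearMap.rTensor_tmul]
      simp [LinearMap.map_smul]⟩)

/-- A right `S`-module `P` is flat if `P ⊗_S −` preserves injectivity of maps of left
`S`-modules.  (This is equivalent to `Tor₁^S(P, M) = 0` for all (finitely generated)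
left `S`-modules `M`.) -/
def IsRightFlat (P : Type*) [AddCommGroup P] [Module Sᵐᵒᵖ P] : Prop :=
  ∀ (M N : Type u) [AddCommGroup M] [Module S M] [AddCommGroup N] [Module S N],
    ∀ g : M →ₗ[S] N, Function.Injective g → Function.Injective (RTensor.map S P g)

/-- A left `S`-module `Q` is flat if `− ⊗_S Q` preserves injectivity of maps of right
`S`-modules. -/
def IsLeftFlat (Q : Type*) [AddCommGroup Q] [Module S Q] : Prop :=
  ∀ (P P' : Type u) [AddCommGroup P] [Module Sᵐᵒᵖ P] [AddCommGroup P'] [Module Sᵐᵒᵖ P'],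
    ∀ h : P →ₗ[Sᵐᵒᵖ] P', Function.Injective h → Function.Injective (RTensor.mapLeft S h Q)

end RTensorLib

/-- The right `Sᵐᵒᵖ`-module structure on `T` induced by a ring homomorphism `f : S →+* T`:
`op s • t = t * f s`. -/
noncomputable def Module.ofRingHomRight {S T : Type*} [Ring S] [Ring T] (f : S →+* T) :
    Module Sᵐᵒᵖ T :=
  Module.compHom T (RingHom.op f)

section Statement4

variable {S T : Type*} [Ring S] [Ring T]

/-- The left ideal `uT` of `T`, viewed as a submodule for the right `S`-action
`op s • t = t * f s`. -/
noncomputable def uLeftIdeal (f : S →+* T) (u : T) [Module Sᵐᵒᵖ T]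
    (hact : ∀ (s : S) (t : T), op s • t = t * f s) : Submodule Sᵐᵒᵖ T where
  carrier := {x | ∃ t, x = u * t}
  add_mem' := by rintro a b ⟨t₁, rfl⟩ ⟨t₂, rfl⟩; exact ⟨t₁ + t₂, by rw [mul_add]⟩
  zero_mem' := ⟨0, by simp⟩
  smul_mem' := by
    rintro c x ⟨t, rfl⟩
    refine ⟨t * f c.unop, ?_⟩
    have h := hact c.unop (u * t)
    rw [op_unop] at h
    rw [h, mul_assoc]

/-- Left multiplication by `u ∈ T` on the balanced tensor product `T ⊗_S M`. -/
noncomputable def uMulTensor (f : S →+* T) (u : T) [Module Sᵐᵒᵖ T]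
    (hact : ∀ (s : S) (t : T), op s • t = t * f s)
    (M : Type*) [AddCommGroup M] [Module S M] :
    RTensor S T M →ₗ[ℤ] RTensor S T M :=
  Submodule.mapQ _ _ (LinearMap.rTensor M (LinearMap.mulLeft ℤ u)) (by
    unfold tensorRel
    rw [Submodule.span_le]
    rintro z ⟨p, s, m, rfl⟩
    apply Submodule.mem_comap.2
    apply Submodule.subset_span
    refine ⟨u * p, s, m, ?_⟩
    erw [LinearMap.map_sub, LinearMap.rTensor_tmul, LinearMap.rTensor_tmul]
    simp [LinearMap.mulLeft_apply, hact, mul_assoc])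

/-!
Since `T` is flat and every element of `T ⊗_S X` already lives in `T ⊗_S X₀` for a finitely
generated `X₀ ≤ X`, left multiplication by `u` is injective on `T ⊗_S X` for every `X`. Hence
`0 → T ⊗_S X → T ⊗_S X → W ⊗_S X → 0` (the maps being `u·` and the projection) is
exact. Given an injection `M → N` with cokernel `C`, a chase through these sequences for
`X = M, N, C`, using flatness of `T` along `M → N → C`, shows that `W ⊗_S M → W ⊗_S N` is
injective.
-/

namespace RTensor

@[ext]
lemma hom_ext {P M A : Type*} [AddCommGroup P] [Module Sᵐᵒᵖ P]
    [AddCommGroup M] [Module S M] [AddCommGroup A] {φ ψ : RTensor S P M →ₗ[ℤ] A}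
    (h : ∀ (p : P) (m : M), φ (Submodule.Quotient.mk (p ⊗ₜ[ℤ] m)) =
      ψ (Submodule.Quotient.mk (p ⊗ₜ[ℤ] m))) : φ = ψ :=
  Submodule.linearMap_qext _ (TensorProduct.ext' h)

lemma mapLeft_map {P Q : Type*} [AddCommGroup P] [Module Sᵐᵒᵖ P]
    [AddCommGroup Q] [Module Sᵐᵒᵖ Q] (h : P →ₗ[Sᵐᵒᵖ] Q)
    {M N : Type*} [AddCommGroup M] [Module S M] [AddCommGroup N] [Module S N]
    (g : M →ₗ[S] N) (x : RTensor S P M) :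
    mapLeft S h N (map S P g x) = map S Q g (mapLeft S h M x) := by
  have : (mapLeft S h N).comp (map S P g) = (map S Q g).comp (mapLeft S h M) := by
    ext; rfl
  exact LinearMap.congr_fun this x

lemma tensorRel_le_map_lTensor (P : Type*) [AddCommGroup P] [Module Sᵐᵒᵖ P]
    {N C : Type*} [AddCommGroup N] [Module S N] [AddCommGroup C] [Module S C]
    {q : N →ₗ[S] C} (hq : Function.Surjective q) :
    tensorRel S P C ≤ (tensorRel S P N).map (LinearMap.lTensor P (q.restrictScalars ℤ)) := by
  refine Submodule.span_le.2 ?_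
  rintro _ ⟨p, s, c, rfl⟩
  obtain ⟨n, rfl⟩ := hq c
  exact ⟨_, Submodule.subset_span ⟨p, s, n, rfl⟩, by simp⟩

lemma tensorRel_le_map_rTensor {P Q : Type*} [AddCommGroup P] [Module Sᵐᵒᵖ P]
    [AddCommGroup Q] [Module Sᵐᵒᵖ Q] {k : P →ₗ[Sᵐᵒᵖ] Q} (hk : Function.Surjective k)
    (M : Type*) [AddCommGroup M] [Module S M] :
    tensorRel S Q M ≤ (tensorRel S P M).map (LinearMap.rTensor M (k.restrictScalars ℤ)) := by
  refine Submodule.span_le.2 ?_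
  rintro _ ⟨q, s, m, rfl⟩
  obtain ⟨p, rfl⟩ := hk q
  exact ⟨_, Submodule.subset_span ⟨p, s, m, rfl⟩, by simp⟩

lemma map_exact (P : Type*) [AddCommGroup P] [Module Sᵐᵒᵖ P]
    {M N C : Type*} [AddCommGroup M] [Module S M] [AddCommGroup N] [Module S N]
    [AddCommGroup C] [Module S C] {g : M →ₗ[S] N} {q : N →ₗ[S] C}
    (hexact : Function.Exact g q) (hq : Function.Surjective q) :
    Function.Exact (map S P g) (map S P q) :=
  ((lTensor_exact (f := g.restrictScalars ℤ) (g := q.restrictScalars ℤ) P hexact hq).exact_mapQ_iff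
      _ _).2
    (inf_le_right.trans (tensorRel_le_map_lTensor P hq))

lemma mapLeft_exact {P Q R : Type*} [AddCommGroup P] [Module Sᵐᵒᵖ P]
    [AddCommGroup Q] [Module Sᵐᵒᵖ Q] [AddCommGroup R] [Module Sᵐᵒᵖ R]
    {h : P →ₗ[Sᵐᵒᵖ] Q} {k : Q →ₗ[Sᵐᵒᵖ] R}
    (hexact : Function.Exact h k) (hk : Function.Surjective k)
    (M : Type*) [AddCommGroup M] [Module S M] :
    Function.Exact (mapLeft S h M) (mapLeft S k M) :=
  ((rTensor_exact (f := h.restrictScalars ℤ) (g := k.restrictScalars ℤ) M hexact hk).exact_mapQ_iff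
      _ _).2
    (inf_le_right.trans (tensorRel_le_map_rTensor hk M))

lemma mapLeft_surjective {P Q : Type*} [AddCommGroup P] [Module Sᵐᵒᵖ P]
    [AddCommGroup Q] [Module Sᵐᵒᵖ Q] {h : P →ₗ[Sᵐᵒᵖ] Q} (hh : Function.Surjective h)
    (M : Type*) [AddCommGroup M] [Module S M] :
    Function.Surjective (mapLeft S h M) := by
  intro x
  obtain ⟨y, rfl⟩ := Submodule.Quotient.mk_surjective _ x
  obtain ⟨z, rfl⟩ := LinearMap.rTensor_surjective (g := h.restrictScalars ℤ) M hh y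
  exact ⟨Submodule.Quotient.mk z, rfl⟩

end RTensor

namespace RTensor

lemma exists_finite_submodule_map_eq (P : Type*) [AddCommGroup P] [Module Sᵐᵒᵖ P]
    {M : Type*} [AddCommGroup M] [Module S M] (x : RTensor S P M) :
    ∃ (M₀ : Submodule S M) (x₀ : RTensor S P M₀),
      Module.Finite S M₀ ∧ map S P M₀.subtype x₀ = x := by
  classical
  obtain ⟨x', rfl⟩ := Submodule.Quotient.mk_surjective _ x
  obtain ⟨s, rfl⟩ := TensorProduct.exists_finset x'
  let M₀ := Submodule.span S (s.image Prod.snd : Set M)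
  have hmem : ∀ i ∈ s, i.2 ∈ M₀ := fun i hi =>
    Submodule.subset_span (Finset.mem_image_of_mem _ hi)
  refine ⟨M₀, Submodule.Quotient.mk (∑ i ∈ s.attach, i.1.1 ⊗ₜ[ℤ] ⟨i.1.2, hmem _ i.2⟩),
    Module.Finite.span_of_finite S (Finset.finite_toSet _), ?_⟩
  show Submodule.Quotient.mk (LinearMap.lTensor P _ _) = _
  rw [map_sum]
  exact congrArg _ (Finset.sum_attach s fun i => i.1 ⊗ₜ[ℤ] i.2)

lemma injective_mapLeft_of_finite {P Q : Type*} [AddCommGroup P] [Module Sᵐᵒᵖ P]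
    [AddCommGroup Q] [Module Sᵐᵒᵖ Q] (hQ : IsRightFlat.{u} S Q) (h : P →ₗ[Sᵐᵒᵖ] Q)
    (hfin : ∀ (M : Type u) [AddCommGroup M] [Module S M], Module.Finite S M →
      Function.Injective (mapLeft S h M))
    (M : Type u) [AddCommGroup M] [Module S M] :
    Function.Injective (mapLeft S h M) := by
  refine (injective_iff_map_eq_zero _).2 fun x hx => ?_
  obtain ⟨M₀, x₀, hM₀, rfl⟩ := exists_finite_submodule_map_eq P x
  rw [mapLeft_map] at hx
  have : mapLeft S h M₀ x₀ = 0 :=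
    hQ M₀ M M₀.subtype M₀.injective_subtype (hx.trans (map_zero _).symm)
  rw [hfin M₀ hM₀ (this.trans (map_zero _).symm), map_zero]

end RTensor

theorem isRightFlat_of_exact {P₁ P₂ W : Type*} [AddCommGroup P₁] [Module Sᵐᵒᵖ P₁]
    [AddCommGroup P₂] [Module Sᵐᵒᵖ P₂] [AddCommGroup W] [Module Sᵐᵒᵖ W]
    {μ : P₁ →ₗ[Sᵐᵒᵖ] P₂} {π : P₂ →ₗ[Sᵐᵒᵖ] W} (hexact : Function.Exact μ π)
    (hπ : Function.Surjective π) (hP₂ : IsRightFlat.{u} S P₂)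
    (hμ : ∀ (X : Type u) [AddCommGroup X] [Module S X],
      Function.Injective (RTensor.mapLeft S μ X)) :
    IsRightFlat.{u} S W := by
  intro M N _ _ _ _ g hg
  let q := (LinearMap.range g).mkQ
  have hgq : Function.Exact g q := LinearMap.exact_iff.2 (Submodule.ker_mkQ _)
  have hq : Function.Surjective q := Submodule.mkQ_surjective _
  refine (injective_iff_map_eq_zero _).2 fun x hx => ?_
  obtain ⟨a, rfl⟩ := RTensor.mapLeft_surjective hπ M x
  obtain ⟨b, hb⟩ := (RTensor.mapLeft_exact (S := S) hexact hπ N _).1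
    (by rw [RTensor.mapLeft_map π g a, hx])
  have hqb : RTensor.map S P₁ q b = 0 := by
    refine hμ _ ?_
    rw [RTensor.mapLeft_map, hb, (RTensor.map_exact P₂ hgq hq).apply_apply_eq_zero, map_zero]
  obtain ⟨c, rfl⟩ := (RTensor.map_exact P₁ hgq hq _).1 hqb
  obtain rfl : RTensor.mapLeft S μ M c = a :=
    hP₂ M N g hg (by rw [← RTensor.mapLeft_map, hb])
  exact (RTensor.mapLeft_exact (S := S) hexact hπ M).apply_apply_eq_zero c

noncomputable def leftMulLinear (f : S →+* T) (u : T) [Module Sᵐᵒᵖ T]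
    (hact : ∀ (s : S) (t : T), op s • t = t * f s) : T →ₗ[Sᵐᵒᵖ] T where
  toFun t := u * t
  map_add' := mul_add u
  map_smul' c t := by rw [RingHom.id_apply, ← op_unop c, hact, hact, mul_assoc]

lemma uMulTensor_eq_mapLeft (f : S →+* T) (u : T) [Module Sᵐᵒᵖ T]
    (hact : ∀ (s : S) (t : T), op s • t = t * f s) (M : Type*) [AddCommGroup M] [Module S M] :
    uMulTensor f u hact M = RTensor.mapLeft S (leftMulLinear f u hact) M :=
  rfl

lemma exact_leftMulLinear_mkQ (f : S →+* T) (u : T) [Module Sᵐᵒᵖ T]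
    (hact : ∀ (s : S) (t : T), op s • t = t * f s) :
    Function.Exact (leftMulLinear f u hact) (uLeftIdeal f u hact).mkQ := by
  refine LinearMap.exact_iff.2 (Submodule.ker_mkQ _ |>.trans ?_)
  ext x
  exact ⟨fun ⟨t, ht⟩ => ⟨t, ht.symm⟩, fun ⟨t, ht⟩ => ⟨t, ht.symm⟩⟩

theorem flat_quotient_by_regular_element_general (f : S →+* T) (u : T) [Module Sᵐᵒᵖ T]
    (hact : ∀ (s : S) (t : T), op s • t = t * f s)
    (hflatT : IsRightFlat.{u} S T)
    (htors : ∀ (M : Type u) [AddCommGroup M] [Module S M], Module.Finite S M →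
      Function.Injective (uMulTensor f u hact M)) :
    IsRightFlat.{u} S (T ⧸ uLeftIdeal f u hact) :=
  isRightFlat_of_exact (exact_leftMulLinear_mkQ f u hact) (Submodule.mkQ_surjective _) hflatT
    (RTensor.injective_mapLeft_of_finite hflatT _ fun M _ _ hM =>
      uMulTensor_eq_mapLeft f u hact M ▸ htors M hM)

/-- Let `S → T` be a ring homomorphism (so `T` is a right `S`-module via
`op s • t = t * f s`) and `u ∈ T` a left regular element.  Suppose
(a) `T` is flat as a right `S`-module, and
(b) for every finitely generated left `S`-module `M`, the module `T ⊗_S M` has no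
`u`-torsion.  Then `W := T/uT` is also flat as a right `S`-module. -/
theorem flat_quotient_by_regular_element (f : S →+* T) (u : T) [Module Sᵐᵒᵖ T]
    (hact : ∀ (s : S) (t : T), op s • t = t * f s)
    (hu : Function.Injective fun t : T => u * t)
    (hflatT : IsRightFlat.{u} S T)
    (htors : ∀ (M : Type u) [AddCommGroup M] [Module S M], Module.Finite S M →
      Function.Injective (uMulTensor f u hact M)) :
    IsRightFlat.{u} S (T ⧸ uLeftIdeal f u hact) :=
  flat_quotient_by_regular_element_general f u hact hflatT htors

end Statement4
end

section
/- Let R be a complete discrete valuation ring with uniformizer-like element π (a nonzero nonunit), and let C• be a cochain complex of flat (equivalently, π-torsion-free) R-modules whose cohomology groups are all bounded π-torsion (each H^q(C•) is killed by some power of π). Then the π-adic completion Ĉ• of C• satisfies H^q(Ĉ•) ≅ H^q(C•) for all q; in particular Ĉ• ⊗_R K is exact, where K = Frac(R). -/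
/-- The cohomology at `B` of a pair of composable linear maps `f : A → B`, `g : B → C`
(with `g ∘ f = 0`): the quotient `ker g / im f`. -/
noncomputable abbrev pairCohomology {R A B C : Type*} [CommRing R]
    [AddCommGroup A] [Module R A] [AddCommGroup B] [Module R B]
    [AddCommGroup C] [Module R C] (f : A →ₗ[R] B) (g : B →ₗ[R] C) : Type _ :=
  ↥(LinearMap.ker g) ⧸ (LinearMap.range f).comap (LinearMap.ker g).subtype

/-!
For a piece `A →f B →g C →h D` of the complex with `C`, `D` free of `π`-torsion and with
`π ^ N₁ • H(f, g) = 0`, `π ^ N₂ • H(g, h) = 0`, the map `H(f, g) → H(f̂, ĝ)` induced by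
`M → M̂` is bijective. If `g x ≡ 0 mod π ^ (N₂ + n)`, then `x` is a cycle modulo `π ^ n`; so a
cycle of `ĝ` is represented at every level `n` by a cycle `z n` of `g`. Consecutive
`z (N₁ + n)` differ by `π ^ (N₁ + n)` times a cycle, hence by `π ^ n` times a boundary, and
these boundaries sum to a convergent series in `Â`. Injectivity is the same argument at the
single level `N₁`. Hence `H(f̂, ĝ)` is killed by `π ^ N₁`; a cycle of `ĝ ⊗ K` is then a
boundary, since clearing denominators turns it into a cycle of `ĝ` whose `π ^ N₁`-multiple is a
boundary of `f̂`.
-/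

open LinearMap Submodule

section

variable {R : Type*} [CommRing R] {π : R}
variable {A B C D : Type*} [AddCommGroup A] [Module R A] [AddCommGroup B] [Module R B]
  [AddCommGroup C] [Module R C] [AddCommGroup D] [Module R D]

theorem mem_span_singleton_pow_smul_top {n : ℕ} {x : B} :
    x ∈ (Ideal.span {π} ^ n • ⊤ : Submodule R B) ↔ ∃ c, π ^ n • c = x := by
  simp [Ideal.span_singleton_pow, ideal_span_singleton_smul, mem_smul_pointwise_iff_exists]

theorem smul_mem_range_of_isTorsionBy {f : A →ₗ[R] B} {g : B →ₗ[R] C} {r : R}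
    (hr : Module.IsTorsionBy R (pairCohomology f g) r) {x : B} (hx : g x = 0) :
    r • x ∈ range f := by
  have := @hr (Submodule.Quotient.mk ⟨x, hx⟩)
  rwa [← Submodule.Quotient.mk_smul, Submodule.Quotient.mk_eq_zero] at this

theorem smul_mem_range_of_map_smul_eq_zero {f : A →ₗ[R] B} {g : B →ₗ[R] C} {r : R}
    (hC : IsSMulRegular C r) (hr : Module.IsTorsionBy R (pairCohomology f g) r) {w : B}
    (hw : g (r • w) = 0) : r • w ∈ range f :=
  smul_mem_range_of_isTorsionBy hr (hC.right_eq_zero_of_smul (by rwa [← map_smul]))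

theorem exists_mem_ker_add_pow_smul {g : B →ₗ[R] C} {h : C →ₗ[R] D} (hhg : h ∘ₗ g = 0)
    (hD : IsSMulRegular D π) {N : ℕ} (hN : Module.IsTorsionBy R (pairCohomology g h) (π ^ N))
    {n : ℕ} {x : B} {y : C} (hx : g x = π ^ (N + n) • y) :
    ∃ z, g z = 0 ∧ ∃ c, x = z + π ^ n • c := by
  have hy : h y = 0 := (hD.pow _).right_eq_zero_of_smul <| by
    rw [← map_smul, ← hx, ← comp_apply, hhg, LinearMap.zero_apply]
  obtain ⟨c, hc⟩ := smul_mem_range_of_isTorsionBy hN hy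
  refine ⟨x - π ^ n • c, ?_, c, (sub_add_cancel _ _).symm⟩
  rw [map_sub, map_smul, hc, hx, smul_smul, ← pow_add, add_comm, sub_self]

namespace AdicCompletion

theorem val_eq_mk_of_le {I : Ideal R} {x : AdicCompletion I B} {m n : ℕ} (hnm : n ≤ m) {z : B}
    (hz : x.val m = Submodule.Quotient.mk z) : x.val n = Submodule.Quotient.mk z := by
  rw [← x.property hnm, hz]
  rfl

end AdicCompletion

variable (π) in
noncomputable abbrev completionMap (f : A →ₗ[R] B) :
    AdicCompletion (Ideal.span {π}) A →ₗ[R] AdicCompletion (Ideal.span {π}) B :=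
  (AdicCompletion.map (Ideal.span {π}) f).restrictScalars R

theorem completionMap_mk_val (f : A →ₗ[R] B)
    (a : AdicCompletion.AdicCauchySequence (Ideal.span {π}) A) (n : ℕ) :
    (completionMap π f (AdicCompletion.mk _ _ a)).val n = Submodule.Quotient.mk (f (a n)) := by
  simp [AdicCompletion.map_mk]

variable (π) in
noncomputable def adicSeries (e : ℕ → A) : AdicCompletion.AdicCauchySequence (Ideal.span {π}) A :=
  AdicCompletion.AdicCauchySequence.mk _ A (fun n ↦ ∑ k ∈ Finset.range n, π ^ k • e k) fun n ↦ by
    rw [SModEq.sub_mem, Finset.sum_range_succ, sub_add_cancel_left, neg_mem_iff,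
      mem_span_singleton_pow_smul_top]
    exact ⟨_, rfl⟩

variable (π) in
noncomputable def toCompletionCohomology (f : A →ₗ[R] B) (g : B →ₗ[R] C) :
    pairCohomology f g →ₗ[R] pairCohomology (completionMap π f) (completionMap π g) :=
  mapQ _ _ ((AdicCompletion.of _ B).restrict fun x hx ↦ by
      simp [mem_ker.mp hx, AdicCompletion.map_of])
    fun _ ⟨a, ha⟩ ↦ ⟨AdicCompletion.of _ A a, by simp [AdicCompletion.map_of, ha]; rfl⟩

theorem mem_range_of_of_mem_range_completionMap {f : A →ₗ[R] B} {g : B →ₗ[R] C}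
    (hgf : g ∘ₗ f = 0) (hC : IsSMulRegular C π) {N : ℕ}
    (hN : Module.IsTorsionBy R (pairCohomology f g) (π ^ N)) {z : B} (hz : g z = 0)
    (h : AdicCompletion.of _ B z ∈ range (completionMap π f)) : z ∈ range f := by
  obtain ⟨t, ht⟩ := h
  obtain ⟨t, rfl⟩ := AdicCompletion.mk_surjective _ A t
  have hmem : z - f (t N) ∈ (Ideal.span {π} ^ N • ⊤ : Submodule R B) := by
    rw [← SModEq.sub_mem, SModEq, ← completionMap_mk_val, ht]
    rfl
  obtain ⟨w, hw⟩ := mem_span_singleton_pow_smul_top.mp hmem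
  have hgw : g (π ^ N • w) = 0 := by
    rw [hw, map_sub, hz, ← comp_apply, hgf, LinearMap.zero_apply, sub_zero]
  simpa [hw] using add_mem (mem_range_self f (t N))
    (smul_mem_range_of_map_smul_eq_zero (hC.pow N) hN hgw)

theorem exists_mem_ker_val_eq_of_completionMap_eq_zero {g : B →ₗ[R] C} {h : C →ₗ[R] D}
    (hhg : h ∘ₗ g = 0) (hD : IsSMulRegular D π) {N : ℕ}
    (hN : Module.IsTorsionBy R (pairCohomology g h) (π ^ N)) {x : AdicCompletion _ B}
    (hx : completionMap π g x = 0) (n : ℕ) :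
    ∃ z, g z = 0 ∧ x.val n = Submodule.Quotient.mk z := by
  obtain ⟨a, rfl⟩ := AdicCompletion.mk_surjective _ B x
  have hmem : g (a (N + n)) ∈ (Ideal.span {π} ^ (N + n) • ⊤ : Submodule R C) := by
    rw [← Submodule.Quotient.mk_eq_zero, ← completionMap_mk_val, hx]
    rfl
  obtain ⟨y, hy⟩ := mem_span_singleton_pow_smul_top.mp hmem
  obtain ⟨z, hz, c, hc⟩ := exists_mem_ker_add_pow_smul hhg hD hN hy.symm
  refine ⟨z, hz, ?_⟩
  rw [AdicCompletion.val_eq_mk_of_le (Nat.le_add_left n N) (AdicCompletion.mk_apply_coe _ _ _ _),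
    hc, Submodule.Quotient.eq, add_sub_cancel_left]
  exact mem_span_singleton_pow_smul_top.mpr ⟨c, rfl⟩

theorem sub_of_mem_range_completionMap {f : A →ₗ[R] B} {g : B →ₗ[R] C}
    (hC : IsSMulRegular C π) {N : ℕ} (hN : Module.IsTorsionBy R (pairCohomology f g) (π ^ N))
    {x : AdicCompletion _ B} {z : ℕ → B} (hz : ∀ n, g (z n) = 0)
    (hxz : ∀ n, x.val n = Submodule.Quotient.mk (z n)) :
    x - AdicCompletion.of _ B (z N) ∈ range (completionMap π f) := by
  have hstep : ∀ n, ∃ e, z (N + n + 1) - z (N + n) = π ^ n • f e := by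
    intro n
    have hmem : z (N + n + 1) - z (N + n) ∈ (Ideal.span {π} ^ (N + n) • ⊤ : Submodule R B) := by
      rw [← SModEq.sub_mem, SModEq, ← AdicCompletion.val_eq_mk_of_le (Nat.le_succ _) (hxz _),
        hxz]
    obtain ⟨w, hw⟩ := mem_span_singleton_pow_smul_top.mp hmem
    rw [pow_add, mul_comm, mul_smul] at hw
    have hgw : g (π ^ N • w) = 0 := (hC.pow n).right_eq_zero_of_smul <| by
      rw [← map_smul, hw, map_sub, hz, hz, sub_self]
    obtain ⟨e, he⟩ := smul_mem_range_of_map_smul_eq_zero (hC.pow N) hN hgw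
    exact ⟨e, by rw [← hw, he]⟩
  choose e he using hstep
  refine ⟨AdicCompletion.mk _ _ (adicSeries π e), AdicCompletion.ext fun n ↦ ?_⟩
  have hsum : f (adicSeries π e n) = z (N + n) - z N := by
    simp only [adicSeries, AdicCompletion.AdicCauchySequence.mk_coe, map_sum, map_smul, ← he]
    exact Finset.sum_range_sub (fun k ↦ z (N + k)) n
  rw [completionMap_mk_val, hsum, AdicCompletion.val_sub_apply,
    AdicCompletion.val_eq_mk_of_le (Nat.le_add_left n N) (hxz (N + n)),
    AdicCompletion.of_apply, mkQ_apply, Submodule.Quotient.mk_sub]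

theorem bijective_toCompletionCohomology {f : A →ₗ[R] B} {g : B →ₗ[R] C} {h : C →ₗ[R] D}
    (hgf : g ∘ₗ f = 0) (hhg : h ∘ₗ g = 0) (hC : IsSMulRegular C π) (hD : IsSMulRegular D π)
    {N₁ N₂ : ℕ} (hN₁ : Module.IsTorsionBy R (pairCohomology f g) (π ^ N₁))
    (hN₂ : Module.IsTorsionBy R (pairCohomology g h) (π ^ N₂)) :
    Function.Bijective (toCompletionCohomology π f g) := by
  refine ⟨(injective_iff_map_eq_zero _).mpr fun y hy ↦ ?_, fun y ↦ ?_⟩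
  · obtain ⟨⟨z, hz⟩, rfl⟩ := Submodule.Quotient.mk_surjective _ y
    unfold toCompletionCohomology at hy
    rw [mapQ_apply, Submodule.Quotient.mk_eq_zero] at hy
    rw [Submodule.Quotient.mk_eq_zero]
    exact mem_range_of_of_mem_range_completionMap hgf hC hN₁ hz hy
  · obtain ⟨⟨x, hx⟩, rfl⟩ := Submodule.Quotient.mk_surjective _ y
    choose z hz hxz using exists_mem_ker_val_eq_of_completionMap_eq_zero hhg hD hN₂ hx
    refine ⟨Submodule.Quotient.mk ⟨z N₁, hz N₁⟩, ((Submodule.Quotient.eq _).mpr ?_).symm⟩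
    exact sub_of_mem_range_completionMap hC hN₁ hz hxz

open TensorProduct in
theorem range_baseChange_eq_ker_baseChange {f : A →ₗ[R] B} {g : B →ₗ[R] C}
    (S : Submonoid R) (L : Type*) [CommRing L] [Algebra R L] [IsLocalization S L]
    (hgf : g ∘ₗ f = 0) (htors : Module.IsTorsion' (pairCohomology f g) S) :
    range (f.baseChange L) = ker (g.baseChange L) := by
  refine le_antisymm (range_le_ker_iff.mpr ?_) fun x hx ↦ ?_
  · rw [← baseChange_comp, hgf, baseChange_zero]
  obtain ⟨⟨m, s⟩, hms⟩ := IsLocalizedModule.surj S (TensorProduct.mk R L B 1) x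
  obtain ⟨t, ht⟩ := IsLocalizedModule.exists_of_eq (S := S) (f := TensorProduct.mk R L C 1)
    (x₁ := g m) (x₂ := 0) <| by
      have := congrArg (g.baseChange L) hms
      rw [map_smul_of_tower, mem_ker.mp hx, smul_zero] at this
      simpa using this.symm
  rw [smul_zero, Submonoid.smul_def, ← map_smul] at ht
  obtain ⟨u, hu⟩ := @htors (Submodule.Quotient.mk ⟨(t : R) • m, ht⟩)
  rw [← Submodule.Quotient.mk_smul, Submodule.Quotient.mk_eq_zero] at hu
  obtain ⟨e, he⟩ := hu
  replace he : f e = ((u : R) * t) • m := by rw [he, mul_smul]; rfl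
  have hunit : IsUnit (algebraMap R L (u * t * s)) := IsLocalization.map_units L (u * t * s)
  have hux : hunit.unit • x = f.baseChange L (1 ⊗ₜ e) := by
    rw [Submonoid.smul_def] at hms
    rw [Units.smul_def, IsUnit.unit_spec, algebraMap_smul, mul_smul, hms, baseChange_tmul, he,
      tmul_smul, mk_apply]
  rw [← Submodule.smul_mem_iff' _ hunit.unit, hux]
  exact mem_range_self _ _

theorem completionMap_comp_eq_zero {f : A →ₗ[R] B} {g : B →ₗ[R] C} (hgf : g ∘ₗ f = 0) :
    completionMap π g ∘ₗ completionMap π f = 0 :=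
  LinearMap.ext fun x ↦ (AdicCompletion.map_comp_apply _ f g x).trans <| by
    rw [hgf, AdicCompletion.map_zero]
    rfl

end

theorem adic_completion_cohomology_of_bounded_torsion_general
    {R : Type*} [CommRing R] [IsDomain R]
    (π : R) (hπ0 : π ≠ 0)
    {K : Type*} [Field K] [Algebra R K] [IsFractionRing R K]
    (C : ℤ → Type*) [∀ q, AddCommGroup (C q)] [∀ q, Module R (C q)]
    (d : ∀ q : ℤ, C q →ₗ[R] C (q + 1))
    (hdd : ∀ q : ℤ, (d (q + 1)).comp (d q) = 0)
    (htf : ∀ (q : ℤ) (x : C q), π • x = 0 → x = 0)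
    (hbdd : ∀ q : ℤ, ∃ N : ℕ,
      ∀ y : pairCohomology (d q) (d (q + 1)), (π ^ N : R) • y = 0) :
    (∀ q : ℤ, Nonempty
      (pairCohomology
          ((AdicCompletion.map (Ideal.span {π}) (d q)).restrictScalars R)
          ((AdicCompletion.map (Ideal.span {π}) (d (q + 1))).restrictScalars R) ≃ₗ[R]
        pairCohomology (d q) (d (q + 1)))) ∧
    ∀ q : ℤ,
      LinearMap.range
          (((AdicCompletion.map (Ideal.span {π}) (d q)).restrictScalars R).baseChange K) =
        LinearMap.ker
          (((AdicCompletion.map (Ideal.span {π}) (d (q + 1))).restrictScalars R).baseChange K)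
    := by
  have hreg q : IsSMulRegular (C q) π := .of_right_eq_zero_of_smul (htf q)
  choose N hN using hbdd
  have hbij q := bijective_toCompletionCohomology (hdd q) (hdd (q + 1)) (hreg _) (hreg _)
    (hN q) (hN (q + 1))
  refine ⟨fun q ↦ ⟨(LinearEquiv.ofBijective _ (hbij q)).symm⟩, fun q ↦ ?_⟩
  refine range_baseChange_eq_ker_baseChange (nonZeroDivisors R) K
    (completionMap_comp_eq_zero (hdd q)) fun y ↦ ?_
  obtain ⟨x, rfl⟩ := (hbij q).2 y
  refine ⟨⟨π ^ N q, pow_mem (mem_nonZeroDivisors_of_ne_zero hπ0) _⟩, ?_⟩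
  rw [Submonoid.mk_smul, ← map_smul, hN q x, map_zero]

/-- Let `R` be a complete discrete valuation ring with nonzero nonunit `π`
and fraction field `K`, and let `C•` be a cochain complex of `π`-torsion-free (equivalently,
flat) `R`-modules whose cohomology groups are all bounded `π`-torsion.  Then the `π`-adic
completion `Ĉ•` of `C•` satisfies `H^q(Ĉ•) ≅ H^q(C•)` for all `q`; in particular `Ĉ• ⊗_R K`
is exact.  (Cohomology in degree `q+1` is the cohomology of the pair `(d q, d (q+1))`;
as `q` ranges over `ℤ` this covers all degrees.) -/
theorem adic_completion_cohomology_of_bounded_torsion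
    {R : Type*} [CommRing R] [IsDomain R] [IsDiscreteValuationRing R]
    (π : R) (hπ0 : π ≠ 0) (hπu : ¬IsUnit π)
    [IsAdicComplete (Ideal.span {π}) R]
    {K : Type*} [Field K] [Algebra R K] [IsFractionRing R K]
    (C : ℤ → Type*) [∀ q, AddCommGroup (C q)] [∀ q, Module R (C q)]
    (d : ∀ q : ℤ, C q →ₗ[R] C (q + 1))
    (hdd : ∀ q : ℤ, (d (q + 1)).comp (d q) = 0)
    (htf : ∀ (q : ℤ) (x : C q), π • x = 0 → x = 0)
    (hbdd : ∀ q : ℤ, ∃ N : ℕ,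
      ∀ y : pairCohomology (d q) (d (q + 1)), (π ^ N : R) • y = 0) :
    (∀ q : ℤ, Nonempty
      (pairCohomology
          ((AdicCompletion.map (Ideal.span {π}) (d q)).restrictScalars R)
          ((AdicCompletion.map (Ideal.span {π}) (d (q + 1))).restrictScalars R) ≃ₗ[R]
        pairCohomology (d q) (d (q + 1)))) ∧
    ∀ q : ℤ,
      LinearMap.range
          (((AdicCompletion.map (Ideal.span {π}) (d q)).restrictScalars R).baseChange K) =
        LinearMap.ker
          (((AdicCompletion.map (Ideal.span {π}) (d (q + 1))).restrictScalars R).baseChange K) :=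
  adic_completion_cohomology_of_bounded_torsion_general π hπ0 C d hdd htf hbdd
end

section
/- Let σ : A → B be an étale morphism of K-affinoid algebras. Then there is a unique A-linear map ψ : Der_K(A) → Der_K(B) such that ψ(u) ∘ σ = σ ∘ u for each u ∈ Der_K(A); moreover ψ is a homomorphism of K-Lie algebras. -/
/-!
Since `B` is formally étale over `A`, the canonical map `B ⊗[A] Ω[A⁄K] → Ω[B⁄K]` is an
isomorphism, so by the base-change adjunction restricting derivations along `σ : A → B` is a
bijection `Der_K(B, M) ≃ Der_K(A, M)` for every `B`-module `M`. The lift `ψ u` of `u` is the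
preimage of `σ ∘ u`: it is `A`-linear by construction, unique by injectivity of restriction, and
compatible with brackets because `⁅ψ u, ψ v⁆` also restricts to `σ ∘ ⁅u, v⁆`.
-/

universe u

namespace Derivation

section FormallyEtale

variable (R A B : Type*) [CommRing R] [CommRing A] [CommRing B] [Algebra R A] [Algebra R B]
  [Algebra A B] [IsScalarTower R A B] [Algebra.FormallyEtale A B]

section Module

variable (M : Type*) [AddCommGroup M] [Module R M] [Module A M] [Module B M]
  [IsScalarTower R A M] [IsScalarTower R B M] [IsScalarTower A B M]

open KaehlerDifferential in
theorem compAlgebraMapL_bijective_of_formallyEtale :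
    Function.Bijective (compAlgebraMapL R A B M) := by
  let e : Derivation R B M ≃ Derivation R A M :=
    ((linearMapEquivDerivation R B).symm ≪≫ₗ
      LinearEquiv.congrLeft M B (tensorKaehlerEquivOfFormallyEtale R A B).symm ≪≫ₗ
      (LinearMap.liftBaseChangeEquiv B).symm).toEquiv.trans
      (linearMapEquivDerivation R A).toEquiv
  have he : ⇑e = compAlgebraMapL R A B M := by
    ext d a
    simp [e]
  exact he ▸ e.bijective

noncomputable def compAlgebraMapEquivOfFormallyEtale : Derivation R B M ≃ₗ[B] Derivation R A M :=
  .ofBijective _ (compAlgebraMapL_bijective_of_formallyEtale R A B M)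

end Module

noncomputable def liftOfFormallyEtale : Derivation R A A →ₗ[A] Derivation R B B :=
  ((compAlgebraMapEquivOfFormallyEtale R A B B).symm.restrictScalars A).toLinearMap ∘ₗ
    (Algebra.linearMap A B).compDer

variable {R A B}

theorem eq_liftOfFormallyEtale_iff {u : Derivation R A A} {D : Derivation R B B} :
    D = liftOfFormallyEtale R A B u ↔ ∀ a, D (algebraMap A B a) = algebraMap A B (u a) := by
  rw [liftOfFormallyEtale, LinearMap.comp_apply, LinearEquiv.coe_coe,
    LinearEquiv.restrictScalars_apply, LinearEquiv.eq_symm_apply, Derivation.ext_iff]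
  rfl

theorem liftOfFormallyEtale_apply_algebraMap (u : Derivation R A A) (a : A) :
    liftOfFormallyEtale R A B u (algebraMap A B a) = algebraMap A B (u a) :=
  eq_liftOfFormallyEtale_iff.1 rfl a

theorem liftOfFormallyEtale_lie (u v : Derivation R A A) :
    liftOfFormallyEtale R A B ⁅u, v⁆ =
      ⁅liftOfFormallyEtale R A B u, liftOfFormallyEtale R A B v⁆ := by
  refine (eq_liftOfFormallyEtale_iff.2 fun a => ?_).symm
  simp only [commutator_apply, liftOfFormallyEtale_apply_algebraMap, map_sub]

end FormallyEtale

end Derivation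

theorem etale_lift_of_derivations_general
    {K : Type*} [NontriviallyNormedField K]
    {A B : Type u} [CommRing A] [Algebra K A] [CommRing B] [Algebra K B]
    [Algebra A B] [IsScalarTower K A B] [Algebra.FormallyEtale A B] :
    (∃! ψ : Derivation K A A → Derivation K B B,
        (∀ u v : Derivation K A A, ψ (u + v) = ψ u + ψ v) ∧
        (∀ (a : A) (u : Derivation K A A), ψ (a • u) = algebraMap A B a • ψ u) ∧
        (∀ (u : Derivation K A A) (a : A),
          ψ u (algebraMap A B a) = algebraMap A B (u a))) ∧
      ∀ ψ : Derivation K A A → Derivation K B B,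
        ((∀ u v : Derivation K A A, ψ (u + v) = ψ u + ψ v) ∧
          (∀ (a : A) (u : Derivation K A A), ψ (a • u) = algebraMap A B a • ψ u) ∧
          (∀ (u : Derivation K A A) (a : A),
            ψ u (algebraMap A B a) = algebraMap A B (u a))) →
        ∀ u v : Derivation K A A, ψ ⁅u, v⁆ = ⁅ψ u, ψ v⁆ := by
  set ψ := Derivation.liftOfFormallyEtale K A B
  have eq_ψ : ∀ φ : Derivation K A A → Derivation K B B,
      (∀ u a, φ u (algebraMap A B a) = algebraMap A B (u a)) → φ = ψ :=
    fun φ hφ => funext fun u => Derivation.eq_liftOfFormallyEtale_iff.2 (hφ u)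
  refine ⟨⟨ψ, ⟨map_add ψ, fun a u => ?_, Derivation.liftOfFormallyEtale_apply_algebraMap⟩,
    fun φ hφ => eq_ψ φ hφ.2.2⟩, fun φ hφ => ?_⟩
  · rw [map_smul, algebraMap_smul]
  · rw [eq_ψ φ hφ.2.2]
    exact Derivation.liftOfFormallyEtale_lie

/-- Let `σ : A → B` be an étale morphism of `K`-affinoid algebras over a
complete discretely valued field `K`.  Then there is a unique `A`-linear map
`ψ : Der_K(A) → Der_K(B)` such that `ψ(u) ∘ σ = σ ∘ u` for each `u ∈ Der_K(A)`; moreover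
`ψ` is a homomorphism of `K`-Lie algebras.

In this formalisation the affinoid algebras `A`, `B` are commutative `K`-algebras and
étaleness of `σ` (recorded by the `Algebra A B` instance) is expressed by
`Algebra.FormallyEtale A B`, which captures the defining property used in the proof: the
canonical map `B ⊗_A Ω_{A/K} → Ω_{B/K}` is an isomorphism, so that `K`-linear derivations
of `B` are uniquely determined by (and lift uniquely from) their restriction to `A`.
`A`-linearity of `ψ` means `ψ(a • u) = σ(a) • ψ(u)`. -/
theorem etale_lift_of_derivations
    {K : Type*} [NontriviallyNormedField K] [CompleteSpace K]
    {A B : Type u} [CommRing A] [Algebra K A] [CommRing B] [Algebra K B]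
    [Algebra A B] [IsScalarTower K A B] [Algebra.FormallyEtale A B] :
    (∃! ψ : Derivation K A A → Derivation K B B,
        (∀ u v : Derivation K A A, ψ (u + v) = ψ u + ψ v) ∧
        (∀ (a : A) (u : Derivation K A A), ψ (a • u) = algebraMap A B a • ψ u) ∧
        (∀ (u : Derivation K A A) (a : A),
          ψ u (algebraMap A B a) = algebraMap A B (u a))) ∧
      ∀ ψ : Derivation K A A → Derivation K B B,
        ((∀ u v : Derivation K A A, ψ (u + v) = ψ u + ψ v) ∧
          (∀ (a : A) (u : Derivation K A A), ψ (a • u) = algebraMap A B a • ψ u) ∧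
          (∀ (u : Derivation K A A) (a : A),
            ψ u (algebraMap A B a) = algebraMap A B (u a))) →
        ∀ u v : Derivation K A A, ψ ⁅u, v⁆ = ⁅ψ u, ψ v⁆ :=
  etale_lift_of_derivations_general
end

section
/- Let 𝒜 be a π-adically complete R-algebra, u an R-linear derivation of 𝒜, and b ∈ 𝒜⟨t⟩ := the π-adic completion of 𝒜[t]. Then u extends uniquely to an R-linear derivation v of 𝒜⟨t⟩ with v(t) = b. -/
/-- The `π`-adic completion `𝒜⟨t⟩` of the polynomial ring `𝒜[t]`. -/
noncomputable abbrev PolyPiCompletion (R : Type*) [CommRing R] (π : R)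
    (𝒜 : Type*) [CommRing 𝒜] [Algebra R 𝒜] : Type _ :=
  AdicCompletion (Ideal.span {Polynomial.C (algebraMap R 𝒜 π)}) (Polynomial 𝒜)

noncomputable instance (R : Type*) [CommRing R] (π : R)
    (𝒜 : Type*) [CommRing 𝒜] [Algebra R 𝒜] :
    Algebra R (PolyPiCompletion R π 𝒜) :=
  ((algebraMap (Polynomial 𝒜)
      (PolyPiCompletion R π 𝒜)).comp (algebraMap R (Polynomial 𝒜))).toAlgebra

/-!
On `𝒜[t]` the derivation is forced: `p ↦ (u applied to the coefficients of p) + b · p'`.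
Every `R`-linear derivation kills `π`, so this map sends `π ^ n 𝒜[t]` into `π ^ n 𝒜⟨t⟩` and
therefore induces maps `𝒜[t] / π ^ n → 𝒜⟨t⟩ / π ^ n`, which assemble to a derivation of the
completion. Conversely, a derivation of `𝒜⟨t⟩` vanishing on `𝒜[t]` is `𝒜[t]`-linear, hence
preserves `π ^ n 𝒜⟨t⟩`; since `𝒜[t]` is dense modulo every `π ^ n 𝒜⟨t⟩` and `𝒜⟨t⟩` is
`π`-adically separated, it vanishes.
-/

open Polynomial

namespace Polynomial

variable {R A M : Type*} [CommSemiring R] [CommSemiring A] [Algebra R A] [AddCommMonoid M]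
  [Module A[X] M] [Module R M]

theorem derivation_ext_of_C {D₁ D₂ : Derivation R A[X] M} (hC : ∀ a, D₁ (C a) = D₂ (C a))
    (hX : D₁ X = D₂ X) : D₁ = D₂ :=
  Derivation.ext fun p ↦ by
    induction p using Polynomial.induction_on' with
    | add p q hp hq => rw [map_add, map_add, hp, hq]
    | monomial n a =>
      rw [← C_mul_X_pow_eq_monomial]
      simp only [Derivation.leibniz, Derivation.leibniz_pow, hC, hX]

end Polynomial

namespace Derivation

section

variable {R A B : Type*} [CommRing R] [CommRing A] [Algebra R A] [CommRing B] [Algebra A[X] B]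
  [Module R B] [IsScalarTower R A[X] B]

noncomputable def extendToPolynomial (u : Derivation R A A) (b : B) : Derivation R A[X] B :=
  (Algebra.linearMap A[X] B).compDer (PolynomialModule.equivPolynomialSelf.compDer u.mapCoeffs) +
    (LinearMap.toSpanSingleton A[X] B b).compDer (derivative'.restrictScalars R)

@[simp]
theorem extendToPolynomial_C (u : Derivation R A A) (b : B) (a : A) :
    u.extendToPolynomial b (C a) = algebraMap A[X] B (C (u a)) := by
  simp [extendToPolynomial]

@[simp]
theorem extendToPolynomial_X (u : Derivation R A A) (b : B) :
    u.extendToPolynomial b X = b := by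
  simp [extendToPolynomial]

end

section

variable {R A M : Type*} [CommSemiring R] [CommSemiring A] [Algebra R A] [AddCommMonoid M]
  [Module A M] [Module R M]

theorem map_mem_span_singleton_pow_smul_top (D : Derivation R A M) {t : A} (ht : D t = 0)
    (n : ℕ) (x : A) (hx : x ∈ (Ideal.span {t}) ^ n • (⊤ : Submodule A A)) :
    D x ∈ (Ideal.span {t}) ^ n • (⊤ : Submodule A M) := by
  rw [smul_eq_mul, Ideal.mul_top, Ideal.span_singleton_pow, Ideal.mem_span_singleton] at hx
  obtain ⟨c, rfl⟩ := hx
  simp only [leibniz, leibniz_pow, ht, smul_zero, add_zero]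
  exact Submodule.smul_mem_smul (Ideal.pow_mem_pow (Ideal.mem_span_singleton_self t) n)
    Submodule.mem_top

end

end Derivation

namespace AdicCompletion

variable {S : Type*} [CommRing S] {I : Ideal S} {M N : Type*} [AddCommGroup M] [Module S M]
  [AddCommGroup N] [Module S N]

theorem sub_of_out_mem_pow_smul_top (hI : I.FG) (x : AdicCompletion I M) (n : ℕ) :
    x - of I M (x.val n).out ∈ (I ^ n • ⊤ : Submodule S (AdicCompletion I M)) := by
  rw [pow_smul_top_eq_ker_eval hI, LinearMap.mem_ker, map_sub, eval_apply, eval_of,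
    Submodule.mkQ_apply, Submodule.Quotient.mk_out, sub_self]

theorem linearMap_ext_of_fg (hI : I.FG) {P : Type*} [AddCommGroup P] [Module S P]
    [IsHausdorff I P] {f g : AdicCompletion I M →ₗ[S] P} (h : f ∘ₗ of I M = g ∘ₗ of I M) :
    f = g := by
  rw [← sub_eq_zero] at h ⊢
  refine LinearMap.ext fun x ↦ IsHausdorff.haus ‹_› _ fun n ↦ ?_
  have hof : (f - g) (of I M (x.val n).out) = 0 := LinearMap.congr_fun h _
  rw [SModEq.zero, ← sub_add_cancel x (of I M (x.val n).out), map_add, hof, add_zero]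
  exact Submodule.smul_top_le_comap_smul_top _ _ (sub_of_out_mem_pow_smul_top hI x n)

section Extend

variable (f : N →+ AdicCompletion I M)
  (hf : ∀ n, ∀ y ∈ (I ^ n • ⊤ : Submodule S N),
    f y ∈ (I ^ n • ⊤ : Submodule S (AdicCompletion I M)))
include hf

theorem val_apply_eq_of_mk_eq {n : ℕ} {y z : N}
    (h : (Submodule.Quotient.mk y : N ⧸ (I ^ n • ⊤ : Submodule S N)) = Submodule.Quotient.mk z) :
    (f y).val n = (f z).val n := by
  rw [← sub_eq_zero, ← val_sub_apply, ← map_sub]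
  exact pow_smul_top_le_ker_eval I n (hf n _ ((Submodule.Quotient.eq _).1 h))

noncomputable def extendAddHom : AdicCompletion I N →+ AdicCompletion I M where
  toFun x := ⟨fun n ↦ (f (x.val n).out).val n, fun {m n} hmn ↦ by
    rw [(f _).property hmn]
    refine val_apply_eq_of_mk_eq f hf ?_
    rw [Submodule.Quotient.mk_out (x.val m), ← x.property hmn]
    conv_rhs => rw [← Submodule.Quotient.mk_out (x.val n)]
    rfl⟩
  map_zero' := ext fun n ↦ by
    refine (val_apply_eq_of_mk_eq f hf (z := 0) ?_).trans (by rw [_root_.map_zero])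
    rw [Submodule.Quotient.mk_out]
    rfl
  map_add' x y := ext fun n ↦ by
    refine (val_apply_eq_of_mk_eq f hf (z := (x.val n).out + (y.val n).out) ?_).trans
      (by rw [_root_.map_add]; rfl)
    rw [Submodule.Quotient.mk_add, Submodule.Quotient.mk_out, Submodule.Quotient.mk_out,
      Submodule.Quotient.mk_out]
    rfl

theorem extendAddHom_val {x : AdicCompletion I N} {n : ℕ} {y : N}
    (h : x.val n = Submodule.Quotient.mk y) : (extendAddHom f hf x).val n = (f y).val n :=
  val_apply_eq_of_mk_eq f hf (by rw [Submodule.Quotient.mk_out, h])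

theorem extendAddHom_of (y : N) : extendAddHom f hf (of I N y) = f y :=
  ext fun _ ↦ extendAddHom_val f hf rfl

end Extend

theorem extendAddHom_mul (f : S →+ AdicCompletion I S)
    (hf : ∀ n, ∀ y ∈ (I ^ n • ⊤ : Submodule S S),
      f y ∈ (I ^ n • ⊤ : Submodule S (AdicCompletion I S)))
    (hmul : ∀ p q, f (p * q) = p • f q + q • f p) (x y : AdicCompletion I S) :
    extendAddHom f hf (x * y) = x * extendAddHom f hf y + y * extendAddHom f hf x := by
  ext n
  set p := (x.val n).out
  set q := (y.val n).out
  have hx : x.val n = Submodule.Quotient.mk p := (Submodule.Quotient.mk_out _).symm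
  have hy : y.val n = Submodule.Quotient.mk q := (Submodule.Quotient.mk_out _).symm
  have hxy : (x * y).val n = Submodule.Quotient.mk (p * q) := by
    rw [val_mul, hx, hy]; rfl
  rw [val_add_apply, val_mul, val_mul, extendAddHom_val f hf hxy, extendAddHom_val f hf hx,
    extendAddHom_val f hf hy, hmul, val_add_apply, val_smul_apply, val_smul_apply, hx, hy]
  simp only [Algebra.smul_def, Ideal.Quotient.algebraMap_eq]
  rfl

section Derivation

/- The `R`-algebra structure on the completion is a parameter, subject to `hR`, because the one
on `𝒜⟨t⟩` is not definitionally Mathlib's. -/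
variable {R : Type*} [CommRing R] [Algebra R S] [Algebra R (AdicCompletion I S)]
  (hR : algebraMap R (AdicCompletion I S) = (algebraMap S _).comp (algebraMap R S))
  (D : Derivation R S (AdicCompletion I S))
  (hD : ∀ n, ∀ y ∈ (I ^ n • ⊤ : Submodule S S),
    D y ∈ (I ^ n • ⊤ : Submodule S (AdicCompletion I S)))

noncomputable def extendDerivation : Derivation R (AdicCompletion I S) (AdicCompletion I S) :=
  have hmul := extendAddHom_mul (D : S →+ AdicCompletion I S) hD D.leibniz
  { toFun := extendAddHom (D : S →+ AdicCompletion I S) hD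
    map_add' := map_add _
    map_smul' := fun r x ↦ by
      have hr : algebraMap R (AdicCompletion I S) r = of I S (algebraMap R S r) := by
        rw [hR]; rfl
      have hEr : extendAddHom (D : S →+ AdicCompletion I S) hD (algebraMap R _ r) = 0 := by
        rw [hr, extendAddHom_of (D : S →+ AdicCompletion I S) hD]
        exact D.map_algebraMap r
      rw [RingHom.id_apply, Algebra.smul_def, hmul, hEr, mul_zero, add_zero, hr,
        ← algebraMap_smul S r, Algebra.smul_def]
      rfl
    map_one_eq_zero' :=
      (extendAddHom_of (D : S →+ AdicCompletion I S) hD 1).trans D.map_one_eq_zero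
    leibniz' := hmul }

theorem extendDerivation_algebraMap (s : S) :
    extendDerivation hR D hD (algebraMap S _ s) = D s :=
  extendAddHom_of (D : S →+ AdicCompletion I S) hD s

theorem derivation_ext_of_fg (hI : I.FG)
    {δ₁ δ₂ : Derivation R (AdicCompletion I S) (AdicCompletion I S)}
    (h : ∀ s, δ₁ (algebraMap S _ s) = δ₂ (algebraMap S _ s)) : δ₁ = δ₂ := by
  let δ : AdicCompletion I S →ₗ[S] AdicCompletion I S :=
    { toFun := ⇑(δ₁ - δ₂)
      map_add' := map_add _
      map_smul' := fun s x ↦ by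
        rw [RingHom.id_apply, Algebra.smul_def, Derivation.leibniz, Derivation.sub_apply
          (a := algebraMap S _ s), h, sub_self, smul_zero, add_zero, smul_eq_mul,
          ← Algebra.smul_def] }
  have hδ : δ = 0 := linearMap_ext_of_fg hI (LinearMap.ext fun s ↦ sub_eq_zero.2 (h s))
  exact Derivation.ext fun x ↦ sub_eq_zero.1 (LinearMap.congr_fun hδ x)

end Derivation

end AdicCompletion

theorem derivation_extends_to_pi_adic_completion_of_polynomials_general
    {R : Type*} [CommRing R]
    (π : R)
    (𝒜 : Type*) [CommRing 𝒜] [Algebra R 𝒜]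
    (u : Derivation R 𝒜 𝒜) (b : PolyPiCompletion R π 𝒜) :
    ∃! v : Derivation R (PolyPiCompletion R π 𝒜) (PolyPiCompletion R π 𝒜),
      (∀ a : 𝒜,
        v (algebraMap (Polynomial 𝒜) (PolyPiCompletion R π 𝒜) (Polynomial.C a)) =
          algebraMap (Polynomial 𝒜) (PolyPiCompletion R π 𝒜) (Polynomial.C (u a))) ∧
      v (algebraMap (Polynomial 𝒜) (PolyPiCompletion R π 𝒜) Polynomial.X) = b := by
  set D := u.extendToPolynomial b
  have hD := D.map_mem_span_singleton_pow_smul_top (D.map_algebraMap π)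
  refine ⟨AdicCompletion.extendDerivation rfl D hD, ⟨fun a ↦ ?_, ?_⟩, fun v ⟨hC, hX⟩ ↦ ?_⟩
  · rw [AdicCompletion.extendDerivation_algebraMap, Derivation.extendToPolynomial_C]
  · rw [AdicCompletion.extendDerivation_algebraMap, Derivation.extendToPolynomial_X]
  have := IsScalarTower.of_algebraMap_eq' (R := R) (S := 𝒜[X]) (A := PolyPiCompletion R π 𝒜) rfl
  have hvD : v.compAlgebraMap 𝒜[X] = D :=
    Polynomial.derivation_ext_of_C (fun a ↦ by simp [hC, D]) (by simp [hX, D])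
  refine AdicCompletion.derivation_ext_of_fg (Submodule.fg_span_singleton _) fun p ↦ ?_
  rw [AdicCompletion.extendDerivation_algebraMap, ← hvD, Derivation.compAlgebraMap_apply]

/-- Let `R` be a complete DVR with nonzero nonunit `π`, `𝒜` a
`π`-adically complete `R`-algebra, `u` an `R`-linear derivation of `𝒜` and
`b ∈ 𝒜⟨t⟩`, the `π`-adic completion of `𝒜[t]`.  Then `u` extends uniquely to an
`R`-linear derivation `v` of `𝒜⟨t⟩` with `v(t) = b`. -/
theorem derivation_extends_to_pi_adic_completion_of_polynomials
    {R : Type*} [CommRing R] [IsDomain R] [IsDiscreteValuationRing R]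
    (π : R) (hπ0 : π ≠ 0) (hπu : ¬IsUnit π)
    [IsAdicComplete (Ideal.span {π}) R]
    (𝒜 : Type*) [CommRing 𝒜] [Algebra R 𝒜]
    [IsAdicComplete (Ideal.span {algebraMap R 𝒜 π}) 𝒜]
    (u : Derivation R 𝒜 𝒜) (b : PolyPiCompletion R π 𝒜) :
    ∃! v : Derivation R (PolyPiCompletion R π 𝒜) (PolyPiCompletion R π 𝒜),
      (∀ a : 𝒜,
        v (algebraMap (Polynomial 𝒜) (PolyPiCompletion R π 𝒜) (Polynomial.C a)) =
          algebraMap (Polynomial 𝒜) (PolyPiCompletion R π 𝒜) (Polynomial.C (u a))) ∧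
      v (algebraMap (Polynomial 𝒜) (PolyPiCompletion R π 𝒜) Polynomial.X) = b :=
  derivation_extends_to_pi_adic_completion_of_polynomials_general π 𝒜 u b
end

section
/- Let 𝒜 be an affine formal model in a reduced K-affinoid algebra A and let (ℒ, ρ) be an (R,𝒜)-Lie algebra. Let f ∈ A be such that ρ(ℒ)(f) ⊆ 𝒜. Then there exist lifts σ₁, σ₂ : ℒ → Der_R(𝒜⟨t⟩) of the anchor ρ (both 𝒜-linear Lie algebra homomorphisms extending the action of ℒ on 𝒜) such that σ₁(x)(t) = ρ(x)(f) and σ₂(x)(t) = −t²·ρ(x)(f) for all x ∈ ℒ. -/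
section AffineFormalModel

variable (R K : Type*) [CommRing R] [IsDomain R] [IsDiscreteValuationRing R] (π : R)
  [Field K] [Algebra R K] [IsFractionRing R K]
  (A : Type*) [CommRing A] [Algebra K A] [Algebra R A] [IsScalarTower R K A]

/-- An affine formal model `𝒜` in the (reduced `K`-affinoid) algebra `A`: an `R`-subalgebra
of `A` which is an admissible `R`-algebra (topologically of finite type -- every element of
`𝒜` is `π`-adically approximated by elements of a finitely generated `R`-subalgebra -- and
automatically `R`-flat, being contained in a `K`-vector space) with `𝒜 ⊗_R K = A`,
i.e. every element of `A` is carried into `𝒜` by some power of `π`. -/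
def IsAffineFormalModel (𝒜 : Subalgebra R A) : Prop :=
  (∀ a : A, ∃ n : ℕ, (π ^ n) • a ∈ 𝒜) ∧
  ∃ s : Finset A, (↑s : Set A) ⊆ (𝒜 : Set A) ∧
    ∀ x ∈ 𝒜, ∀ n : ℕ, ∃ y ∈ Algebra.adjoin R (↑s : Set A), ∃ w ∈ 𝒜, x - y = (π ^ n) • w

end AffineFormalModel

/-- The `π`-adic completion `𝒜⟨t⟩` of the polynomial ring `𝒜[t]`. -/
noncomputable abbrev PolyPiCompletion' (R : Type*) [CommRing R] (π : R)
    (𝒜 : Type*) [CommRing 𝒜] [Algebra R 𝒜] : Type _ :=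
  AdicCompletion (Ideal.span {Polynomial.C (algebraMap R 𝒜 π)}) (Polynomial 𝒜)

noncomputable instance (R : Type*) [CommRing R] (π : R)
    (𝒜 : Type*) [CommRing 𝒜] [Algebra R 𝒜] :
    Algebra R (PolyPiCompletion' R π 𝒜) :=
  ((algebraMap (Polynomial 𝒜)
      (PolyPiCompletion' R π 𝒜)).comp (algebraMap R (Polynomial 𝒜))).toAlgebra

instance (R : Type*) [CommRing R] (π : R)
    (𝒜 : Type*) [CommRing 𝒜] [Algebra R 𝒜] :
    SMulCommClass R (PolyPiCompletion' R π 𝒜) (PolyPiCompletion' R π 𝒜) :=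
  @Algebra.to_smulCommClass R _ _ _ (AdicCompletion.instAlgebra _)

/-!
An `R`-derivation of `𝒜[t]` is determined by its values on `𝒜` and at `t`, and for every
`q ∈ R[t]` the assignment `x ↦ (ρ x on coefficients, t ↦ q(t) · ρ x f)` is `𝒜`-linear and
bracket-preserving: the commutator of the derivations for `x` and `y` sends `t` to
`q · (ρ x (ρ y f) - ρ y (ρ x f)) = q · ρ ⁅x, y⁆ f`, the terms `q q' · ρ x f · ρ y f` cancelling by
symmetry. An `R`-derivation kills `π`, so it preserves the ideals `π ^ n 𝒜[t]` and acts levelwise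
on the `π`-adic completion `𝒜⟨t⟩`. The two lifts are the cases `q = 1` and `q = -t²`.
-/

open Polynomial

namespace Derivation

section Quotient

variable {R S : Type*} [CommRing R] [CommRing S] [Algebra R S]

theorem map_mem_span_singleton_pow (D : Derivation R S S) {s : S} (hs : D s = 0) (n : ℕ)
    {p : S} (hp : p ∈ Ideal.span {s} ^ n) : D p ∈ Ideal.span {s} ^ n := by
  rw [Ideal.span_singleton_pow, Ideal.mem_span_singleton] at hp ⊢
  obtain ⟨q, rfl⟩ := hp
  rw [leibniz, leibniz_pow, hs, smul_zero, smul_zero, smul_zero, add_zero, smul_eq_mul]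
  exact dvd_mul_right _ _

noncomputable def quotientPowMap (D : Derivation R S S) {s : S} (hs : D s = 0) (n : ℕ) :
    S ⧸ (Ideal.span {s} ^ n • ⊤ : Submodule S S) →ₗ[R]
      S ⧸ (Ideal.span {s} ^ n • ⊤ : Submodule S S) where
  toFun := Quotient.map' D fun p q h => by
    rw [Submodule.quotientRel_def, smul_eq_mul, Ideal.mul_top] at h ⊢
    simpa only [map_sub] using D.map_mem_span_singleton_pow hs n h
  map_add' x y := by
    obtain ⟨p, rfl⟩ := Submodule.Quotient.mk_surjective _ x
    obtain ⟨q, rfl⟩ := Submodule.Quotient.mk_surjective _ y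
    exact congrArg (Submodule.mkQ _) (map_add D p q)
  map_smul' r x := by
    obtain ⟨p, rfl⟩ := Submodule.Quotient.mk_surjective _ x
    exact congrArg (Submodule.mkQ _) (D.map_smul r p)

theorem transitionMap_quotientPowMap (D : Derivation R S S) {s : S} (hs : D s = 0) {m n : ℕ}
    (hmn : m ≤ n) (x : S ⧸ (Ideal.span {s} ^ n • ⊤ : Submodule S S)) :
    AdicCompletion.transitionMap _ S hmn (D.quotientPowMap hs n x) =
      D.quotientPowMap hs m (AdicCompletion.transitionMap _ S hmn x) := by
  obtain ⟨p, rfl⟩ := Submodule.Quotient.mk_surjective _ x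
  rfl

theorem quotientPowMap_mul (D : Derivation R S S) {s : S} (hs : D s = 0) (n : ℕ)
    (x y : S ⧸ (Ideal.span {s} ^ n • ⊤ : Ideal S)) :
    D.quotientPowMap hs n (x * y) = x * D.quotientPowMap hs n y + y * D.quotientPowMap hs n x := by
  obtain ⟨p, rfl⟩ := Submodule.Quotient.mk_surjective _ x
  obtain ⟨q, rfl⟩ := Submodule.Quotient.mk_surjective _ y
  exact congrArg (Submodule.mkQ _) (D.leibniz p q)

end Quotient

section Completion

variable {R B : Type*} [CommRing R] [CommRing B] [Algebra R B] (π : R)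

noncomputable def completionFun (D : Derivation R B[X] B[X]) (a : PolyPiCompletion' R π B) :
    PolyPiCompletion' R π B :=
  ⟨fun n => D.quotientPowMap (D.map_algebraMap π) n (a.val n), fun hmn => by
    rw [transitionMap_quotientPowMap, a.property hmn]⟩

theorem completionFun_mul (D : Derivation R B[X] B[X]) (a b : PolyPiCompletion' R π B) :
    completionFun π D (a * b) = a * completionFun π D b + b * completionFun π D a :=
  AdicCompletion.ext fun _ => quotientPowMap_mul _ _ _ _ _

theorem completionFun_algebraMap (D : Derivation R B[X] B[X]) (p : B[X]) :
    completionFun π D (algebraMap B[X] (PolyPiCompletion' R π B) p) =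
      algebraMap B[X] (PolyPiCompletion' R π B) (D p) := rfl

noncomputable def completion (D : Derivation R B[X] B[X]) :
    Derivation R (PolyPiCompletion' R π B) (PolyPiCompletion' R π B) where
  toFun := completionFun π D
  map_add' _ _ := AdicCompletion.ext fun _ => map_add _ _ _
  -- `R` acts on the source through `algebraMap R 𝒜⟨t⟩` but on the target levelwise, as on any
  -- `AdicCompletion`; both are multiplication by the image of `r`.
  map_smul' r a := by
    have h : completionFun π D (algebraMap R (PolyPiCompletion' R π B) r) = 0 :=
      (completionFun_algebraMap π D _).trans (by rw [D.map_algebraMap, map_zero])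
    rw [Algebra.smul_def, RingHom.id_apply,
      @Algebra.smul_def _ _ _ _ (AdicCompletion.instAlgebra _), completionFun_mul, h, mul_zero,
      add_zero]
    rfl
  map_one_eq_zero' := AdicCompletion.ext fun _ => congrArg (Submodule.mkQ _) D.map_one_eq_zero
  leibniz' := completionFun_mul π D

theorem val_completion (D : Derivation R B[X] B[X]) {a : PolyPiCompletion' R π B} {n : ℕ}
    {p : B[X]} (hp : Submodule.Quotient.mk p = a.val n) :
    (D.completion π a).val n = Submodule.Quotient.mk (D p) := by
  show D.quotientPowMap _ n (a.val n) = _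
  rw [← hp]
  rfl

theorem completion_algebraMap (D : Derivation R B[X] B[X]) (p : B[X]) :
    D.completion π (algebraMap B[X] (PolyPiCompletion' R π B) p) =
      algebraMap B[X] (PolyPiCompletion' R π B) (D p) := rfl

theorem completion_add (D₁ D₂ : Derivation R B[X] B[X]) :
    (D₁ + D₂).completion π = D₁.completion π + D₂.completion π :=
  Derivation.ext fun a => AdicCompletion.ext fun n => by
    obtain ⟨p, hp⟩ := Submodule.Quotient.mk_surjective _ (a.val n)
    rw [add_apply, AdicCompletion.val_add_apply, val_completion π _ hp, val_completion π _ hp,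
      val_completion π _ hp, add_apply]
    rfl

theorem completion_smul (c : B[X]) (D : Derivation R B[X] B[X]) :
    (c • D).completion π = algebraMap B[X] (PolyPiCompletion' R π B) c • D.completion π :=
  Derivation.ext fun a => AdicCompletion.ext fun n => by
    obtain ⟨p, hp⟩ := Submodule.Quotient.mk_surjective _ (a.val n)
    show _ = (algebraMap B[X] (PolyPiCompletion' R π B) c * D.completion π a).val n
    rw [val_completion π _ hp, AdicCompletion.val_mul, val_completion π _ hp]
    rfl

theorem completion_lie_apply (D₁ D₂ : Derivation R B[X] B[X]) (a : PolyPiCompletion' R π B) :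
    ⁅D₁, D₂⁆.completion π a =
      D₁.completion π (D₂.completion π a) - D₂.completion π (D₁.completion π a) :=
  AdicCompletion.ext fun n => by
    obtain ⟨p, hp⟩ := Submodule.Quotient.mk_surjective _ (a.val n)
    rw [AdicCompletion.val_sub_apply, val_completion π _ hp,
      val_completion π _ (val_completion π D₂ hp).symm,
      val_completion π _ (val_completion π D₁ hp).symm, commutator_apply]
    rfl

end Completion

section Subalgebra

variable {R A : Type*} [CommRing R] [CommRing A] [Algebra R A] (𝒜 : Subalgebra R A)

def restrictSubalgebra (D : Derivation R A A) (h : ∀ c ∈ 𝒜, D c ∈ 𝒜) : Derivation R 𝒜 𝒜 where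
  toFun c := ⟨D c, h c c.2⟩
  map_add' a b := Subtype.ext (map_add D (a : A) b)
  map_smul' r a := Subtype.ext (D.map_smul r (a : A))
  map_one_eq_zero' := Subtype.ext D.map_one_eq_zero
  leibniz' a b := Subtype.ext (D.leibniz (a : A) b)

@[simp]
theorem coe_restrictSubalgebra_apply (D : Derivation R A A) (h : ∀ c ∈ 𝒜, D c ∈ 𝒜) (c : 𝒜) :
    (D.restrictSubalgebra 𝒜 h c : A) = D c := rfl

end Subalgebra

end Derivation

namespace Polynomial

variable {R B : Type*} [CommRing R] [CommRing B] [Algebra R B]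

noncomputable def extendDerivation (d : Derivation R B B) (g : B[X]) : Derivation R B[X] B[X] :=
  PolynomialModule.equivPolynomialSelf.compDer d.mapCoeffs + (mkDerivation B g).restrictScalars R

@[simp]
theorem extendDerivation_C (d : Derivation R B B) (g : B[X]) (b : B) :
    extendDerivation d g (C b) = C (d b) := by
  simp [extendDerivation, PolynomialModule.equivPolynomialSelf_apply_eq]

@[simp]
theorem extendDerivation_X (d : Derivation R B B) (g : B[X]) : extendDerivation d g X = g := by
  simp [extendDerivation, mkDerivation_apply]

theorem extendDerivation_aeval (d : Derivation R B B) (g : B[X]) (q : R[X]) :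
    extendDerivation d g (aeval X q) = aeval X (derivative q) * g := by
  rw [Derivation.map_aeval, extendDerivation_X, smul_eq_mul]

theorem derivation_ext_of_C_X {D₁ D₂ : Derivation R B[X] B[X]}
    (hC : ∀ b, D₁ (C b) = D₂ (C b)) (hX : D₁ X = D₂ X) : D₁ = D₂ := by
  refine Derivation.ext fun p => ?_
  induction p using Polynomial.induction_on' with
  | add p q hp hq => rw [map_add, map_add, hp, hq]
  | monomial n b =>
    rw [← C_mul_X_pow_eq_monomial, Derivation.leibniz, Derivation.leibniz,
      Derivation.leibniz_pow, Derivation.leibniz_pow, hC, hX]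

theorem extendDerivation_add (d₁ d₂ : Derivation R B B) (g₁ g₂ : B[X]) :
    extendDerivation (d₁ + d₂) (g₁ + g₂) = extendDerivation d₁ g₁ + extendDerivation d₂ g₂ :=
  derivation_ext_of_C_X (by simp) (by simp)

theorem extendDerivation_smul (c : B) (d : Derivation R B B) (g : B[X]) :
    extendDerivation (c • d) (C c * g) = C c • extendDerivation d g :=
  derivation_ext_of_C_X (by simp) (by simp)

theorem extendDerivation_lie (d₁ d₂ : Derivation R B B) (g₁ g₂ : B[X]) :
    ⁅extendDerivation d₁ g₁, extendDerivation d₂ g₂⁆ =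
      extendDerivation ⁅d₁, d₂⁆ (extendDerivation d₁ g₁ g₂ - extendDerivation d₂ g₂ g₁) :=
  derivation_ext_of_C_X (by simp [Derivation.commutator_apply])
    (by simp [Derivation.commutator_apply])

end Polynomial

section Anchor

variable {R A ℒ : Type*} [CommRing R] [CommRing A] [Algebra R A] {𝒜 : Subalgebra R A}
  [LieRing ℒ] [Module 𝒜 ℒ] (ρ : ℒ → Derivation R A A)
  (hρadd : ∀ x y : ℒ, ρ (x + y) = ρ x + ρ y) (hρA : ∀ (c : 𝒜) (x : ℒ), ρ (c • x) = (c : A) • ρ x)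

def restrictAnchor (hstab : ∀ x, ∀ c ∈ 𝒜, ρ x c ∈ 𝒜) : ℒ →ₗ[𝒜] Derivation R 𝒜 𝒜 where
  toFun x := (ρ x).restrictSubalgebra 𝒜 (hstab x)
  map_add' x y := Derivation.ext fun c => Subtype.ext (by simp [hρadd])
  map_smul' c x := Derivation.ext fun b => Subtype.ext (by simp [hρA])

def evalAnchor (f : A) (hf : ∀ x, ρ x f ∈ 𝒜) : ℒ →ₗ[𝒜] 𝒜 where
  toFun x := ⟨ρ x f, hf x⟩
  map_add' x y := Subtype.ext (by simp [hρadd])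
  map_smul' c x := Subtype.ext (by simp [hρA])

theorem restrictAnchor_lie (hρLie : ∀ x y : ℒ, ∀ a : A, ρ ⁅x, y⁆ a = ρ x (ρ y a) - ρ y (ρ x a))
    (hstab : ∀ x, ∀ c ∈ 𝒜, ρ x c ∈ 𝒜) (x y : ℒ) :
    restrictAnchor ρ hρadd hρA hstab ⁅x, y⁆ =
      ⁅restrictAnchor ρ hρadd hρA hstab x, restrictAnchor ρ hρadd hρA hstab y⁆ :=
  Derivation.ext fun _ => Subtype.ext (by simp [restrictAnchor, Derivation.commutator_apply, hρLie])

theorem evalAnchor_lie (hρLie : ∀ x y : ℒ, ∀ a : A, ρ ⁅x, y⁆ a = ρ x (ρ y a) - ρ y (ρ x a))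
    (hstab : ∀ x, ∀ c ∈ 𝒜, ρ x c ∈ 𝒜) (f : A) (hf : ∀ x, ρ x f ∈ 𝒜) (x y : ℒ) :
    evalAnchor ρ hρadd hρA f hf ⁅x, y⁆ =
      restrictAnchor ρ hρadd hρA hstab x (evalAnchor ρ hρadd hρA f hf y) -
        restrictAnchor ρ hρadd hρA hstab y (evalAnchor ρ hρadd hρA f hf x) :=
  Subtype.ext (by simp [restrictAnchor, evalAnchor, hρLie])

end Anchor

section CompletedLift

variable {R B ℒ : Type*} [CommRing R] [CommRing B] [Algebra R B] [LieRing ℒ] [Module B ℒ]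
  (π : R) (d : ℒ →ₗ[B] Derivation R B B) (g : ℒ →ₗ[B] B[X])

noncomputable def completedLift (x : ℒ) :
    Derivation R (PolyPiCompletion' R π B) (PolyPiCompletion' R π B) :=
  (extendDerivation (d x) (g x)).completion π

theorem completedLift_add (x y : ℒ) :
    completedLift π d g (x + y) = completedLift π d g x + completedLift π d g y := by
  rw [completedLift, map_add, map_add, extendDerivation_add, Derivation.completion_add]
  rfl

theorem completedLift_smul (c : B) (x : ℒ) :
    completedLift π d g (c • x) =
      algebraMap B[X] (PolyPiCompletion' R π B) (C c) • completedLift π d g x := by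
  rw [completedLift, map_smul, map_smul, smul_eq_C_mul, extendDerivation_smul,
    Derivation.completion_smul]
  rfl

theorem completedLift_lie_apply (hd : ∀ x y, d ⁅x, y⁆ = ⁅d x, d y⁆)
    (hg : ∀ x y, g ⁅x, y⁆ =
      extendDerivation (d x) (g x) (g y) - extendDerivation (d y) (g y) (g x))
    (x y : ℒ) (b : PolyPiCompletion' R π B) :
    completedLift π d g ⁅x, y⁆ b =
      completedLift π d g x (completedLift π d g y b) -
        completedLift π d g y (completedLift π d g x b) := by
  rw [completedLift, hd, hg, ← extendDerivation_lie, Derivation.completion_lie_apply]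
  rfl

theorem completedLift_C (x : ℒ) (c : B) :
    completedLift π d g x (algebraMap B[X] (PolyPiCompletion' R π B) (C c)) =
      algebraMap B[X] (PolyPiCompletion' R π B) (C (d x c)) := by
  rw [completedLift, Derivation.completion_algebraMap, extendDerivation_C]

theorem completedLift_X (x : ℒ) :
    completedLift π d g x (algebraMap B[X] (PolyPiCompletion' R π B) X) =
      algebraMap B[X] (PolyPiCompletion' R π B) (g x) := by
  rw [completedLift, Derivation.completion_algebraMap, extendDerivation_X]

theorem smulRight_aeval_lie (c : ℒ →ₗ[B] B) (hc : ∀ x y, c ⁅x, y⁆ = d x (c y) - d y (c x))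
    (q : R[X]) (x y : ℒ) :
    c.smulRight (aeval X q) ⁅x, y⁆ =
      extendDerivation (d x) (c.smulRight (aeval X q) x) (c.smulRight (aeval X q) y) -
        extendDerivation (d y) (c.smulRight (aeval X q) y) (c.smulRight (aeval X q) x) := by
  simp only [LinearMap.smulRight_apply, smul_eq_C_mul, Derivation.leibniz, extendDerivation_C,
    extendDerivation_aeval, hc, map_sub, smul_eq_mul]
  ring

end CompletedLift

theorem two_lifts_to_completed_polynomial_ring_general
    {R : Type*} [CommRing R] (π : R)
    {A : Type*} [CommRing A] [Algebra R A]
    (𝒜 : Subalgebra R A)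
    {ℒ : Type*} [LieRing ℒ] [Module ↥𝒜 ℒ]
    (ρ : ℒ → Derivation R A A)
    (hρadd : ∀ x y : ℒ, ρ (x + y) = ρ x + ρ y)
    (hρA : ∀ (c : ↥𝒜) (x : ℒ), ρ (c • x) = (c : A) • ρ x)
    (hρLie : ∀ x y : ℒ, ∀ a : A, ρ ⁅x, y⁆ a = ρ x (ρ y a) - ρ y (ρ x a))
    (hstab : ∀ (x : ℒ), ∀ c ∈ 𝒜, ρ x c ∈ 𝒜)
    (f : A) (hf : ∀ x : ℒ, ρ x f ∈ 𝒜) :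
    ∀ ε : Bool,
      ∃ σ : ℒ → Derivation R (PolyPiCompletion' R π ↥𝒜) (PolyPiCompletion' R π ↥𝒜),
        (∀ x y : ℒ, σ (x + y) = σ x + σ y) ∧
        (∀ (c : ↥𝒜) (x : ℒ), σ (c • x) =
          algebraMap (Polynomial ↥𝒜) (PolyPiCompletion' R π ↥𝒜) (Polynomial.C c) • σ x) ∧
        (∀ x y : ℒ, ∀ b : PolyPiCompletion' R π ↥𝒜,
          σ ⁅x, y⁆ b = σ x (σ y b) - σ y (σ x b)) ∧
        (∀ (x : ℒ) (c : ↥𝒜),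
          σ x (algebraMap (Polynomial ↥𝒜) (PolyPiCompletion' R π ↥𝒜) (Polynomial.C c)) =
            algebraMap (Polynomial ↥𝒜) (PolyPiCompletion' R π ↥𝒜)
              (Polynomial.C ⟨ρ x c, hstab x c c.2⟩)) ∧
        (∀ x : ℒ,
          σ x (algebraMap (Polynomial ↥𝒜) (PolyPiCompletion' R π ↥𝒜) Polynomial.X) =
            if ε then
              algebraMap (Polynomial ↥𝒜) (PolyPiCompletion' R π ↥𝒜)
                (Polynomial.C ⟨ρ x f, hf x⟩)
            else
              - (algebraMap (Polynomial ↥𝒜) (PolyPiCompletion' R π ↥𝒜) Polynomial.X *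
                  algebraMap (Polynomial ↥𝒜) (PolyPiCompletion' R π ↥𝒜) Polynomial.X *
                  algebraMap (Polynomial ↥𝒜) (PolyPiCompletion' R π ↥𝒜)
                    (Polynomial.C ⟨ρ x f, hf x⟩))) := by
  intro ε
  set q : R[X] := if ε then 1 else -X ^ 2
  set d := restrictAnchor ρ hρadd hρA hstab
  set g := (evalAnchor ρ hρadd hρA f hf).smulRight (aeval (X : 𝒜[X]) q)
  have hg := smulRight_aeval_lie d _ (evalAnchor_lie ρ hρadd hρA hρLie hstab f hf) q
  refine ⟨completedLift π d g, completedLift_add π d g, completedLift_smul π d g,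
    completedLift_lie_apply π d g (restrictAnchor_lie ρ hρadd hρA hρLie hstab) hg,
    completedLift_C π d g, fun x => ?_⟩
  rw [completedLift_X]
  cases ε
  · simp only [g, q, evalAnchor, Bool.false_eq_true, ↓reduceIte, map_pow, aeval_X,
      LinearMap.coe_smulRight, LinearMap.coe_mk, AddHom.coe_mk, smul_neg, smul_eq_C_mul, map_neg,
      map_mul, neg_inj]
    ring
  · simp [g, q, evalAnchor, smul_eq_C_mul]

/-- Let `𝒜` be an affine formal model in a reduced `K`-affinoid algebra
`A` and let `(ℒ, ρ)` be an `(R,𝒜)`-Lie algebra (here realised with anchor taking values in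
`Der_R(A)` preserving `𝒜`, via the canonical extension of derivations of `𝒜` to `A`).
Let `f ∈ A` be such that `ρ(ℒ)(f) ⊆ 𝒜`.  Then there are two lifts
`σ₁, σ₂ : ℒ → Der_R(𝒜⟨t⟩)` of the action of `ℒ` on `𝒜` to the `π`-adic completion
`𝒜⟨t⟩` of `𝒜[t]` — each `σᵢ` is `𝒜`-linear, a Lie algebra homomorphism, and restricts to
`ρ` on `𝒜` — such that `σ₁(x)(t) = ρ(x)(f)` and `σ₂(x)(t) = −t²·ρ(x)(f)` for all
`x ∈ ℒ`. -/
theorem two_lifts_to_completed_polynomial_ring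
    {R K : Type*} [CommRing R] [IsDomain R] [IsDiscreteValuationRing R] (π : R)
    (hπ0 : π ≠ 0) (hπu : ¬IsUnit π) [IsAdicComplete (Ideal.span {π}) R]
    [Field K] [Algebra R K] [IsFractionRing R K]
    {A : Type*} [CommRing A] [Algebra K A] [Algebra R A] [IsScalarTower R K A]
    [IsReduced A]
    (𝒜 : Subalgebra R A) (h𝒜 : IsAffineFormalModel R π A 𝒜)
    {ℒ : Type*} [LieRing ℒ] [LieAlgebra R ℒ] [Module ↥𝒜 ℒ]
    (ρ : ℒ → Derivation R A A)
    (hρadd : ∀ x y : ℒ, ρ (x + y) = ρ x + ρ y)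
    (hρA : ∀ (c : ↥𝒜) (x : ℒ), ρ (c • x) = (c : A) • ρ x)
    (hρLie : ∀ x y : ℒ, ∀ a : A, ρ ⁅x, y⁆ a = ρ x (ρ y a) - ρ y (ρ x a))
    (hstab : ∀ (x : ℒ), ∀ c ∈ 𝒜, ρ x c ∈ 𝒜)
    (hLeib : ∀ (x y : ℒ) (c d : ↥𝒜), (d : A) = ρ x (c : A) →
      ⁅x, c • y⁆ = c • ⁅x, y⁆ + d • y)
    (f : A) (hf : ∀ x : ℒ, ρ x f ∈ 𝒜) :
    ∀ ε : Bool,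
      ∃ σ : ℒ → Derivation R (PolyPiCompletion' R π ↥𝒜) (PolyPiCompletion' R π ↥𝒜),
        (∀ x y : ℒ, σ (x + y) = σ x + σ y) ∧
        (∀ (c : ↥𝒜) (x : ℒ), σ (c • x) =
          algebraMap (Polynomial ↥𝒜) (PolyPiCompletion' R π ↥𝒜) (Polynomial.C c) • σ x) ∧
        (∀ x y : ℒ, ∀ b : PolyPiCompletion' R π ↥𝒜,
          σ ⁅x, y⁆ b = σ x (σ y b) - σ y (σ x b)) ∧
        (∀ (x : ℒ) (c : ↥𝒜),
          σ x (algebraMap (Polynomial ↥𝒜) (PolyPiCompletion' R π ↥𝒜) (Polynomial.C c)) =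
            algebraMap (Polynomial ↥𝒜) (PolyPiCompletion' R π ↥𝒜)
              (Polynomial.C ⟨ρ x c, hstab x c c.2⟩)) ∧
        (∀ x : ℒ,
          σ x (algebraMap (Polynomial ↥𝒜) (PolyPiCompletion' R π ↥𝒜) Polynomial.X) =
            if ε then
              algebraMap (Polynomial ↥𝒜) (PolyPiCompletion' R π ↥𝒜)
                (Polynomial.C ⟨ρ x f, hf x⟩)
            else
              - (algebraMap (Polynomial ↥𝒜) (PolyPiCompletion' R π ↥𝒜) Polynomial.X *
                  algebraMap (Polynomial ↥𝒜) (PolyPiCompletion' R π ↥𝒜) Polynomial.X *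
                  algebraMap (Polynomial ↥𝒜) (PolyPiCompletion' R π ↥𝒜)
                    (Polynomial.C ⟨ρ x f, hf x⟩))) :=
  two_lifts_to_completed_polynomial_ring_general π 𝒜 ρ hρadd hρA hρLie hstab f hf
end

section
/- Let U, V, W be left Noetherian K-Banach algebras, P a (U,V)-bimodule finitely generated as a left U-module, Q a (V,W)-bimodule finitely generated as a left V-module. Suppose the algebra maps V^op → End_U(P) and W^op → End_V(Q) are continuous (for the canonical Banach topologies on finitely generated modules). Then P ⊗_V Q is a finitely generated left U-module and the induced map W^op → End_U(P ⊗_V Q) is continuous. -/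
open scoped TensorProduct
open MulOpposite

section BalancedTensor

variable (V : Type*) [Ring V]

/-- The relations defining the balanced tensor product `P ⊗_V Q` of a right `V`-module `P`
and a left `V`-module `Q` as a quotient of `P ⊗_ℤ Q`; here the span is taken over a ring
`U` acting on the left of `P`, commuting with the right `V`-action, so that the quotient
is a left `U`-module. -/
noncomputable def tensorRelU (U : Type*) [Ring U] (P Q : Type*) [AddCommGroup P]
    [Module U P] [Module Vᵐᵒᵖ P] [AddCommGroup Q] [Module V Q] :
    Submodule U (P ⊗[ℤ] Q) :=
  Submodule.span U
    {z | ∃ (p : P) (s : V) (q : Q), z = (op s • p) ⊗ₜ[ℤ] q - p ⊗ₜ[ℤ] (s • q)}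

/-- The balanced tensor product `P ⊗_V Q`, as a left `U`-module. -/
noncomputable abbrev RTensorU (U : Type*) [Ring U] (P Q : Type*) [AddCommGroup P]
    [Module U P] [Module Vᵐᵒᵖ P] [AddCommGroup Q] [Module V Q] : Type _ :=
  (P ⊗[ℤ] Q) ⧸ tensorRelU V U P Q

/-- The right action of `w ∈ W` on `P ⊗_V Q` induced by a right `W`-action on `Q`
commuting with the `V`-action. -/
noncomputable def RTensorU.actRight (U : Type*) [Ring U] (P Q : Type*) [AddCommGroup P]
    [Module U P] [Module Vᵐᵒᵖ P] [AddCommGroup Q] [Module V Q]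
    (W : Type*) [Ring W] [Module Wᵐᵒᵖ Q] [SMulCommClass Wᵐᵒᵖ V Q] (w : W) :
    RTensorU V U P Q →ₗ[U] RTensorU V U P Q :=
  Submodule.mapQ _ _
    { toFun := LinearMap.lTensor P
        ((DistribMulAction.toAddMonoidHom Q (op w)).toIntLinearMap)
      map_add' := by intro a b; exact map_add _ a b
      map_smul' := by
        intro u x
        induction x using TensorProduct.induction_on with
        | zero => simp
        | tmul p q => simp [TensorProduct.smul_tmul']
        | add a b ha hb => simp only [smul_add, map_add, RingHom.id_apply] at ha hb ⊢; rw [ha, hb] }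
    (by
      unfold tensorRelU
      rw [Submodule.span_le]
      rintro z ⟨p, s, q, rfl⟩
      apply Submodule.mem_comap.2
      apply Submodule.subset_span
      refine ⟨p, s, op w • q, ?_⟩
      simp [map_sub, smul_comm])

end BalancedTensor

section Lattices

variable (K : Type*) [NontriviallyNormedField K]

/-- The "unit lattice" spanned by a finite set `X` inside a module `P` over a normed
algebra `U`: all finite sums `Σ cᵢ • xᵢ` with `‖cᵢ‖ ≤ 1` and `xᵢ ∈ X`.  For `X` a finite
generating set this defines the canonical Banach topology of the finitely generated
module `P`. -/
def unitLattice (U P : Type*) [NormedRing U] [AddCommGroup P] [Module U P]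
    (X : Finset P) : Set P :=
  {p | ∃ (k : ℕ) (c : Fin k → U) (y : Fin k → P),
    (∀ i, ‖c i‖ ≤ 1 ∧ y i ∈ X) ∧ p = ∑ i, c i • y i}

/-- Continuity of the map `Vᵒᵖ → End_U(P)` for the canonical Banach topologies:
there are a finite generating set `X` of `P` over `U` and a nonzero constant `c ∈ K` such
that `𝒰X𝒱 ⊆ c⁻¹? 𝒰X`, i.e. the unit ball of `V` moves the unit lattice `𝒰X` into a fixed
`K`-rescaling of itself.  (Here the right action of `V` is given by the `Vᵐᵒᵖ`-module
structure.) -/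
def RightActionBounded (U V P : Type*) [NormedRing U] [NormedAlgebra K U]
    [NormedRing V] [AddCommGroup P] [Module U P] [Module Vᵐᵒᵖ P] : Prop :=
  ∃ X : Finset P, Submodule.span U (X : Set P) = ⊤ ∧ ∃ c : K, c ≠ 0 ∧
    ∀ p ∈ unitLattice U P X, ∀ v : V, ‖v‖ ≤ 1 →
      ∃ q ∈ unitLattice U P X, op v • p = algebraMap K U c • q

end Lattices

/-!
Choose finite generating sets `XP` of `P` and `XQ` of `Q`; the classes `[x ⊗ y]` then generate
`P ⊗_V Q`. Continuity of the two actions says that the unit ball of `W` moves each `y ∈ XQ` to a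
combination `Σ dⱼ yⱼ` with `‖dⱼ‖ ≤ C_Q`, and (after rescaling) that the ball of radius `C_Q` in `V`
moves each `x ∈ XP` to a combination of `XP` with coefficients of norm `≤ C_P`. Moving the
coefficients `dⱼ` across the tensor sign, `[x ⊗ y] w = Σ [x dⱼ ⊗ yⱼ]` is a combination of the
generators `[xᵢ ⊗ yⱼ]` with coefficients of norm `≤ C_P`, which is the continuity of the
`W`-action on `P ⊗_V Q`.
-/

theorem exists_ne_zero_norm_algebraMap_mul_le (K A : Type*) [NontriviallyNormedField K]
    [SeminormedRing A] [NormedAlgebra K A] (C : ℝ) :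
    ∃ s : K, s ≠ 0 ∧ ‖algebraMap K A s‖ * C ≤ 1 := by
  set B : ℝ := (‖(1 : A)‖ + 1) * (|C| + 1)
  have hB : 0 < B := by positivity
  obtain ⟨s, hs0, hs⟩ := NormedField.exists_norm_lt K (inv_pos.2 hB)
  refine ⟨s, norm_pos_iff.1 hs0, ?_⟩
  rw [norm_algebraMap]
  calc ‖s‖ * ‖(1 : A)‖ * C ≤ ‖s‖ * B := by
        rw [mul_assoc]
        gcongr
        nlinarith [le_abs_self C, abs_nonneg C, norm_nonneg (1 : A)]
    _ ≤ B⁻¹ * B := by gcongr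
    _ = 1 := inv_mul_cancel₀ hB.ne'

/-- `unitLattice` with the coefficient bound `1` relaxed to `C`. -/
def boundedSpan (R : Type*) {M : Type*} [NormedRing R] [AddCommGroup M] [Module R M]
    (C : ℝ) (X : Set M) : Set M :=
  {p | ∃ (k : ℕ) (c : Fin k → R) (y : Fin k → M),
    (∀ i, ‖c i‖ ≤ C ∧ y i ∈ X) ∧ p = ∑ i, c i • y i}

section BoundedSpan

variable {R M N : Type*} [NormedRing R] [AddCommGroup M] [Module R M]
  [AddCommGroup N] [Module R N] {C D : ℝ} {X Y : Set M} {p q : M}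

theorem zero_mem_boundedSpan : (0 : M) ∈ boundedSpan R C X :=
  ⟨0, finZeroElim, finZeroElim, finZeroElim, by simp⟩

theorem smul_mem_boundedSpan {c : R} {x : M} (hc : ‖c‖ ≤ C) (hx : x ∈ X) :
    c • x ∈ boundedSpan R C X :=
  ⟨1, fun _ => c, fun _ => x, fun _ => ⟨hc, hx⟩, by simp⟩

theorem add_mem_boundedSpan (hp : p ∈ boundedSpan R C X) (hq : q ∈ boundedSpan R C X) :
    p + q ∈ boundedSpan R C X := by
  obtain ⟨k, c, y, hcy, rfl⟩ := hp
  obtain ⟨l, d, z, hdz, rfl⟩ := hq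
  refine ⟨k + l, Fin.append c d, Fin.append y z, fun i => ?_, ?_⟩
  · refine Fin.addCases (fun j => ?_) (fun j => ?_) i
    · simpa only [Fin.append_left] using hcy j
    · simpa only [Fin.append_right] using hdz j
  · simp [Fin.sum_univ_add, Fin.append_left, Fin.append_right]

theorem sum_mem_boundedSpan {ι : Type*} {s : Finset ι} {f : ι → M}
    (h : ∀ i ∈ s, f i ∈ boundedSpan R C X) : ∑ i ∈ s, f i ∈ boundedSpan R C X :=
  Finset.sum_induction f (· ∈ boundedSpan R C X) (fun _ _ => add_mem_boundedSpan)
    zero_mem_boundedSpan h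

theorem boundedSpan_mono {C' : ℝ} (hC : C ≤ C') (hXY : X ⊆ Y) :
    boundedSpan R C X ⊆ boundedSpan R C' Y := by
  rintro _ ⟨k, c, y, hcy, rfl⟩
  exact ⟨k, c, y, fun i => ⟨(hcy i).1.trans hC, hXY (hcy i).2⟩, rfl⟩

theorem smul_mem_boundedSpan_of_mem {u : R} (hu : ‖u‖ ≤ D) (hp : p ∈ boundedSpan R C X) :
    u • p ∈ boundedSpan R (D * C) X := by
  obtain ⟨k, c, y, hcy, rfl⟩ := hp
  rw [Finset.smul_sum]
  refine sum_mem_boundedSpan fun i _ => ?_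
  rw [smul_smul]
  exact smul_mem_boundedSpan ((norm_mul_le _ _).trans
    (mul_le_mul hu (hcy i).1 (norm_nonneg _) ((norm_nonneg u).trans hu))) (hcy i).2

theorem LinearMap.map_mem_boundedSpan_image (f : M →ₗ[R] N) (hp : p ∈ boundedSpan R C X) :
    f p ∈ boundedSpan R C (f '' X) := by
  obtain ⟨k, c, y, hcy, rfl⟩ := hp
  simp only [map_sum, map_smul]
  exact sum_mem_boundedSpan fun i _ =>
    smul_mem_boundedSpan (hcy i).1 (Set.mem_image_of_mem f (hcy i).2)

theorem LinearMap.map_mem_boundedSpan (f : M →ₗ[R] N) {Y : Set N}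
    (hf : ∀ x ∈ X, f x ∈ boundedSpan R C Y) (hp : p ∈ boundedSpan R D X) :
    f p ∈ boundedSpan R (D * C) Y := by
  obtain ⟨k, c, y, hcy, rfl⟩ := hp
  simp only [map_sum, map_smul]
  exact sum_mem_boundedSpan fun i _ =>
    smul_mem_boundedSpan_of_mem (hcy i).1 (hf _ (hcy i).2)

theorem eventually_mem_boundedSpan {X : Finset M} (hp : p ∈ Submodule.span R (X : Set M)) :
    ∀ᶠ C in Filter.atTop, p ∈ boundedSpan R C X := by
  obtain ⟨f, -, rfl⟩ := Submodule.mem_span_finset.1 hp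
  filter_upwards [(Filter.eventually_all_finset X).2 fun a _ =>
    Filter.eventually_ge_atTop ‖f a‖] with C hC
  exact sum_mem_boundedSpan fun a ha => smul_mem_boundedSpan (hC a ha) ha

end BoundedSpan

section UnitLattice

variable {K U M ι : Type*} [NontriviallyNormedField K] [NormedRing U] [NormedAlgebra K U]
  [AddCommGroup M] [Module U M] (X : Finset M) (f : ι → M →ₗ[U] M) (S : Set ι)

theorem exists_forall_mem_boundedSpan_of_unitLattice
    (h : ∃ c : K, c ≠ 0 ∧ ∀ p ∈ unitLattice U M X, ∀ i ∈ S,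
      ∃ q ∈ unitLattice U M X, f i p = algebraMap K U c • q) :
    ∃ C, ∀ i ∈ S, ∀ x ∈ X, f i x ∈ boundedSpan U C X := by
  obtain ⟨c, -, h⟩ := h
  obtain ⟨s, hs0, hs⟩ := exists_ne_zero_norm_algebraMap_mul_le K U 1
  refine ⟨‖algebraMap K U (s⁻¹ * c)‖ * 1, fun i hi x hx => ?_⟩
  obtain ⟨q, hq, hfq⟩ := h _ (smul_mem_boundedSpan (by simpa using hs) hx) i hi
  have hfx : f i x = algebraMap K U (s⁻¹ * c) • q := by
    rw [map_mul, mul_smul, ← hfq, map_smul, smul_smul, ← map_mul, inv_mul_cancel₀ hs0,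
      map_one, one_smul]
  exact hfx ▸ smul_mem_boundedSpan_of_mem le_rfl hq

variable (K) in
theorem exists_unitLattice_of_forall_mem_boundedSpan {C : ℝ}
    (h : ∀ i ∈ S, ∀ x ∈ X, f i x ∈ boundedSpan U C X) :
    ∃ c : K, c ≠ 0 ∧ ∀ p ∈ unitLattice U M X, ∀ i ∈ S,
      ∃ q ∈ unitLattice U M X, f i p = algebraMap K U c • q := by
  obtain ⟨c, hc0, hc⟩ := exists_ne_zero_norm_algebraMap_mul_le K U C
  refine ⟨c⁻¹, inv_ne_zero hc0, fun p hp i hi => ⟨algebraMap K U c • f i p, ?_, ?_⟩⟩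
  · have hfp := (f i).map_mem_boundedSpan (h i hi) hp
    exact boundedSpan_mono (by simpa using hc) subset_rfl
      (smul_mem_boundedSpan_of_mem le_rfl hfp)
  · rw [smul_smul, ← map_mul, inv_mul_cancel₀ hc0, map_one, one_smul]

end UnitLattice

section RightAction

variable {U V P : Type*} [NormedRing U] [NormedRing V] [AddCommGroup P] [Module U P]
  [Module Vᵐᵒᵖ P] [SMulCommClass Vᵐᵒᵖ U P]

theorem RightActionBounded.exists_forall_mem_boundedSpan {K : Type*} [NontriviallyNormedField K]
    [NormedAlgebra K U] (h : RightActionBounded K U V P) :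
    ∃ X : Finset P, Submodule.span U (X : Set P) = ⊤ ∧
      ∃ C, ∀ v : V, ‖v‖ ≤ 1 → ∀ x ∈ X, op v • x ∈ boundedSpan U C X := by
  obtain ⟨X, hX, h⟩ := h
  exact ⟨X, hX, exists_forall_mem_boundedSpan_of_unitLattice X
    (fun v : V => DistribSMul.toLinearMap U P (op v)) {v | ‖v‖ ≤ 1} h⟩

/-- Write `v = r⁻¹ (r v)` with `‖r v‖ ≤ 1`. The right action of the scalar `r⁻¹` need not agree
with its left action, but it moves the finitely many generators by a bounded amount. -/
theorem exists_forall_norm_le_mem_boundedSpan (K : Type*) [NontriviallyNormedField K]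
    [NormedAlgebra K V] {X : Finset P} (hX : Submodule.span U (X : Set P) = ⊤) {C : ℝ}
    (hC : ∀ v : V, ‖v‖ ≤ 1 → ∀ x ∈ X, op v • x ∈ boundedSpan U C X) (D : ℝ) :
    ∃ C', ∀ v : V, ‖v‖ ≤ D → ∀ x ∈ X, op v • x ∈ boundedSpan U C' X := by
  obtain ⟨r, hr0, hr⟩ := exists_ne_zero_norm_algebraMap_mul_le K V D
  obtain ⟨C₀, hC₀⟩ := ((Filter.eventually_all_finset X).2 fun x _ =>
    eventually_mem_boundedSpan (R := U) (hX ▸ Submodule.mem_top :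
      op (algebraMap K V r⁻¹) • x ∈ Submodule.span U (X : Set P))).exists
  refine ⟨C₀ * C, fun v hv x hx => ?_⟩
  have hv' : ‖algebraMap K V r * v‖ ≤ 1 :=
    (norm_mul_le _ _).trans ((mul_le_mul_of_nonneg_left hv (norm_nonneg _)).trans hr)
  have hsplit : v = algebraMap K V r⁻¹ * (algebraMap K V r * v) := by
    rw [← mul_assoc, ← map_mul, inv_mul_cancel₀ hr0, map_one, one_mul]
  rw [hsplit, op_mul, mul_smul]
  exact (DistribSMul.toLinearMap U P (op (algebraMap K V r * v))).map_mem_boundedSpan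
    (hC _ hv') (hC₀ x hx)

end RightAction

namespace RTensorU

variable {V U P Q : Type*} [AddCommGroup P] [AddCommGroup Q]

section Algebraic

variable [Ring V] [Ring U] [Module U P] [Module Vᵐᵒᵖ P] [Module V Q]

variable (V U P) in
noncomputable def mkTmul (y : Q) : P →ₗ[U] RTensorU V U P Q where
  toFun p := Submodule.Quotient.mk (p ⊗ₜ[ℤ] y)
  map_add' a b := by rw [TensorProduct.add_tmul, Submodule.Quotient.mk_add]
  map_smul' u p := by rw [← TensorProduct.smul_tmul', Submodule.Quotient.mk_smul]; rfl

theorem mkTmul_apply (y : Q) (p : P) :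
    mkTmul V U P y p = Submodule.Quotient.mk (p ⊗ₜ[ℤ] y) :=
  rfl

theorem mk_smul_tmul (p : P) (v : V) (q : Q) :
    (Submodule.Quotient.mk ((op v • p) ⊗ₜ[ℤ] q) : RTensorU V U P Q) =
      Submodule.Quotient.mk (p ⊗ₜ[ℤ] (v • q)) :=
  (Submodule.Quotient.eq _).2 (Submodule.subset_span ⟨p, v, q, rfl⟩)

theorem actRight_mk {W : Type*} [Ring W] [Module Wᵐᵒᵖ Q] [SMulCommClass Wᵐᵒᵖ V Q]
    (w : W) (p : P) (q : Q) :
    actRight V U P Q W w (Submodule.Quotient.mk (p ⊗ₜ[ℤ] q)) =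
      Submodule.Quotient.mk (p ⊗ₜ[ℤ] (op w • q)) :=
  rfl

variable [DecidableEq (RTensorU V U P Q)]

variable (V U) in
noncomputable def tensorGenerators (XP : Finset P) (XQ : Finset Q) : Finset (RTensorU V U P Q) :=
  Finset.image₂ (fun x y => Submodule.Quotient.mk (x ⊗ₜ[ℤ] y)) XP XQ

theorem mkTmul_image_subset_tensorGenerators {XP : Finset P} {XQ : Finset Q} {y : Q}
    (hy : y ∈ XQ) : mkTmul V U P y '' XP ⊆ tensorGenerators V U XP XQ := by
  rintro _ ⟨x, hx, rfl⟩
  exact Finset.mem_image₂_of_mem hx hy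

theorem span_tensorGenerators {XP : Finset P} {XQ : Finset Q}
    (hXP : Submodule.span U (XP : Set P) = ⊤) (hXQ : Submodule.span V (XQ : Set Q) = ⊤) :
    Submodule.span U (tensorGenerators V U XP XQ : Set (RTensorU V U P Q)) = ⊤ := by
  set T := Submodule.span U (tensorGenerators V U XP XQ : Set (RTensorU V U P Q))
  have htmul (q : Q) : ∀ p : P, mkTmul V U P q p ∈ T := by
    induction (hXQ ▸ Submodule.mem_top : q ∈ Submodule.span V (XQ : Set Q))
      using Submodule.span_induction with
    | mem y hy =>
      intro p
      exact Submodule.span_mono (mkTmul_image_subset_tensorGenerators hy)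
        (Submodule.apply_mem_span_image_of_mem_span _ (hXP ▸ Submodule.mem_top))
    | zero =>
      intro p
      rw [mkTmul_apply, TensorProduct.tmul_zero]
      exact zero_mem T
    | add q₁ q₂ _ _ h₁ h₂ =>
      intro p
      rw [mkTmul_apply, TensorProduct.tmul_add, Submodule.Quotient.mk_add]
      exact add_mem (h₁ p) (h₂ p)
    | smul v q _ h =>
      intro p
      rw [mkTmul_apply, ← mk_smul_tmul]
      exact h (op v • p)
  rw [Submodule.eq_top_iff']
  rintro ⟨t⟩
  induction t using TensorProduct.induction_on with
  | zero => exact zero_mem T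
  | tmul p q => exact htmul q p
  | add a b ha hb => exact add_mem ha hb

end Algebraic

variable [NormedRing U] [NormedRing V] [Module U P] [Module Vᵐᵒᵖ P] [Module V Q]
  [DecidableEq (RTensorU V U P Q)] {XP : Finset P} {XQ : Finset Q} {C D : ℝ}

theorem mk_tmul_mem_boundedSpan {x : P} {q : Q}
    (hx : ∀ v : V, ‖v‖ ≤ D → op v • x ∈ boundedSpan U C XP) (hq : q ∈ boundedSpan V D XQ) :
    (Submodule.Quotient.mk (x ⊗ₜ[ℤ] q) : RTensorU V U P Q) ∈
      boundedSpan U C (tensorGenerators V U XP XQ : Set (RTensorU V U P Q)) := by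
  obtain ⟨k, d, y, hdy, rfl⟩ := hq
  rw [TensorProduct.tmul_sum, ← Submodule.mkQ_apply, map_sum]
  refine sum_mem_boundedSpan fun j _ => ?_
  rw [Submodule.mkQ_apply, ← mk_smul_tmul, ← mkTmul_apply]
  exact boundedSpan_mono le_rfl (mkTmul_image_subset_tensorGenerators (hdy j).2)
    ((mkTmul V U P (y j)).map_mem_boundedSpan_image (hx _ (hdy j).1))

theorem actRight_mem_boundedSpan {W : Type*} [Ring W] [Module Wᵐᵒᵖ Q] [SMulCommClass Wᵐᵒᵖ V Q]
    {w : W} (hP : ∀ v : V, ‖v‖ ≤ D → ∀ x ∈ XP, op v • x ∈ boundedSpan U C XP)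
    (hQ : ∀ y ∈ XQ, op w • y ∈ boundedSpan V D XQ) :
    ∀ z ∈ tensorGenerators V U XP XQ, actRight V U P Q W w z ∈
      boundedSpan U C (tensorGenerators V U XP XQ : Set (RTensorU V U P Q)) := by
  intro z hz
  obtain ⟨x, hx, y, hy, rfl⟩ := Finset.mem_image₂.1 hz
  rw [actRight_mk]
  exact mk_tmul_mem_boundedSpan (fun v hv => hP v hv x hx) (hQ y hy)

end RTensorU

theorem tensor_of_bimodules_finite_and_bounded_general
    {K : Type*} [NontriviallyNormedField K]
    {U V W : Type*}
    [NormedRing U] [NormedAlgebra K U]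
    [NormedRing V] [NormedAlgebra K V]
    [NormedRing W]
    (P : Type*) [AddCommGroup P] [Module U P] [Module Vᵐᵒᵖ P]
    [SMulCommClass Vᵐᵒᵖ U P]
    (Q : Type*) [AddCommGroup Q] [Module V Q] [Module Wᵐᵒᵖ Q]
    [SMulCommClass Wᵐᵒᵖ V Q]
    (hP : RightActionBounded K U V P) (hQ : RightActionBounded K V W Q) :
    Module.Finite U (RTensorU V U P Q) ∧
    (∃ X : Finset (RTensorU V U P Q),
      Submodule.span U (X : Set (RTensorU V U P Q)) = ⊤ ∧ ∃ c : K, c ≠ 0 ∧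
      ∀ p ∈ unitLattice U (RTensorU V U P Q) X, ∀ w : W, ‖w‖ ≤ 1 →
        ∃ q ∈ unitLattice U (RTensorU V U P Q) X,
          RTensorU.actRight V U P Q W w p = algebraMap K U c • q) := by
  classical
  obtain ⟨XQ, hXQ, CQ, hCQ⟩ := hQ.exists_forall_mem_boundedSpan
  obtain ⟨XP, hXP, CP, hCP⟩ := hP.exists_forall_mem_boundedSpan
  obtain ⟨C, hC⟩ := exists_forall_norm_le_mem_boundedSpan K hXP hCP CQ
  have hX := RTensorU.span_tensorGenerators (V := V) hXP hXQ
  exact ⟨⟨_, hX⟩, _, hX, exists_unitLattice_of_forall_mem_boundedSpan K _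
    (RTensorU.actRight V U P Q W) {w | ‖w‖ ≤ 1}
    fun w hw => RTensorU.actRight_mem_boundedSpan hC (hCQ w hw)⟩

/-- Let `U`, `V`, `W` be left Noetherian Banach `K`-algebras over a
complete nonarchimedean field `K`, `P` a `(U,V)`-bimodule finitely generated as a left
`U`-module, and `Q` a `(V,W)`-bimodule finitely generated as a left `V`-module.  Suppose
the maps `Vᵒᵖ → End_U(P)` and `Wᵒᵖ → End_V(Q)` are continuous for the canonical Banach
topologies on finitely generated modules (expressed via unit lattices).  Then `P ⊗_V Q`
is a finitely generated left `U`-module and the induced map `Wᵒᵖ → End_U(P ⊗_V Q)` is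
continuous. -/
theorem tensor_of_bimodules_finite_and_bounded
    {K : Type*} [NontriviallyNormedField K] [CompleteSpace K]
    {U V W : Type*}
    [NormedRing U] [NormedAlgebra K U] [CompleteSpace U] [IsNoetherianRing U]
    [NormedRing V] [NormedAlgebra K V] [CompleteSpace V] [IsNoetherianRing V]
    [NormedRing W] [NormedAlgebra K W] [CompleteSpace W] [IsNoetherianRing W]
    (P : Type*) [AddCommGroup P] [Module U P] [Module Vᵐᵒᵖ P]
    [SMulCommClass Vᵐᵒᵖ U P] [Module.Finite U P]
    (Q : Type*) [AddCommGroup Q] [Module V Q] [Module Wᵐᵒᵖ Q]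
    [SMulCommClass Wᵐᵒᵖ V Q] [Module.Finite V Q]
    (hP : RightActionBounded K U V P) (hQ : RightActionBounded K V W Q) :
    Module.Finite U (RTensorU V U P Q) ∧
    (∃ X : Finset (RTensorU V U P Q),
      Submodule.span U (X : Set (RTensorU V U P Q)) = ⊤ ∧ ∃ c : K, c ≠ 0 ∧
      ∀ p ∈ unitLattice U (RTensorU V U P Q) X, ∀ w : W, ‖w‖ ≤ 1 →
        ∃ q ∈ unitLattice U (RTensorU V U P Q) X,
          RTensorU.actRight V U P Q W w p = algebraMap K U c • q) :=
  tensor_of_bimodules_finite_and_bounded_general P Q hP hQ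
end
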